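/- arXiv:0908.3169 — 6 statements merged into one kernel-verified Lean document; each statement's English description precedes it below -/
import Mathlib

section
/- Let k ≥ 4 be an integer, let G be a k-critical graph, let X ⊆ V(G) have size s, and let T be a DFS spanning tree of G∖X (the graph obtained from G by deleting the vertices of X) rooted at a vertex t₀. Then for every integer j ≥ 1, the number of vertices of T at distance exactly j from t₀ in T is at most (k−1)^s if j = 1, and at most (k−2)^{j−2}·(k−1)^s if j ≥ 2. -/
/-!
For a vertex `u` of depth at least one, criticality gives colourings of `G` minus the subtree of
`u`; normalise them on the root and on the depth-one ancestor of `u` and record their traces on the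
boundary `X ∪ {proper ancestors of u}`. Two siblings have disjoint sets of traces, since by the DFS
property the subtree of `u` is attached to the rest of `G` only through this boundary, so two
colourings with a common trace would glue to a `(k-1)`-colouring of `G`. A trace at a child is a
trace at its parent `z` together with the colour of `z`, which is forced at depth one and otherwise
only has to avoid the colour of the parent of `z`. Summing over a level, the number of traces is
therefore at most `(k-1)^s` on levels one and two and grows by a factor of at most `k-2` per level
after that, while every vertex carries at least one trace.
-/

open SimpleGraph

/-- A graph `G` is `k`-critical if every proper subgraph of `G` is `(k-1)`-colorable,
but `G` itself is not. -/
def IsCritical {V : Type*} (k : ℕ) (G : SimpleGraph V) : Prop :=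
  ¬ G.Colorable (k - 1) ∧ ∀ H : G.Subgraph, H ≠ ⊤ → H.coe.Colorable (k - 1)

open Finset Function

theorem Finset.card_le_mul_card_of_injOn_prod {β γ δ : Type*} {s : Finset β} {t : Finset γ}
    (f : β → γ) (g : β → δ) (a : γ → Finset δ) {n : ℕ} (hf : ∀ x ∈ s, f x ∈ t)
    (hg : ∀ x ∈ s, g x ∈ a (f x)) (ha : ∀ y ∈ t, #(a y) ≤ n)
    (hinj : ∀ x ∈ s, ∀ x' ∈ s, f x = f x' → g x = g x' → x = x') :
    #s ≤ n * #t := by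
  classical
  refine card_le_mul_card_image_of_maps_to hf n fun y hy => (ha y hy).trans' ?_
  refine card_le_card_of_injOn g (fun x hx => ?_) fun x hx x' hx' hxx' => ?_
  · rw [mem_coe, mem_filter] at hx
    exact hx.2 ▸ hg x hx.1
  · rw [coe_filter] at hx hx'
    exact hinj x hx.1 x' hx'.1 (hx.2.trans hx'.2.symm) hxx'

theorem Equiv.Perm.exists_apply_eq_apply_eq {α : Type*} [DecidableEq α] {a b c d : α}
    (hab : a ≠ b) (hcd : c ≠ d) : ∃ σ : Equiv.Perm α, σ a = c ∧ σ b = d := by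
  set σ := Equiv.swap a c
  have hσb : σ b ≠ c := fun h => hab (σ.injective (h.trans (Equiv.swap_apply_left a c).symm)).symm
  refine ⟨σ.trans (Equiv.swap (σ b) d), ?_, Equiv.swap_apply_left _ _⟩
  simp only [Equiv.trans_apply, σ, Equiv.swap_apply_left]
  exact Equiv.swap_apply_of_ne_of_ne hσb.symm hcd

theorem Set.piecewise_piecewise_of_subset {α β : Type*} {s t : Set α} [∀ i, Decidable (i ∈ s)]
    [∀ i, Decidable (i ∈ t)] (h : s ⊆ t) (f g : α → β) :
    s.piecewise (t.piecewise f g) g = s.piecewise f g := by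
  ext i
  by_cases hi : i ∈ s
  · simp [hi, h hi]
  · simp [hi]

namespace SimpleGraph

section RootedTree

variable {W : Type*} (T : SimpleGraph W) (r : W)

open Classical in
/-- The vertex at depth `i` on a shortest path from `r` to `u` (in a tree the path is unique);
`u` itself if `u` is unreachable. -/
noncomputable def ancestor (u : W) (i : ℕ) : W :=
  if h : T.Reachable r u then h.exists_path_of_dist.choose.getVert i else u

/-- The tree order of `T` rooted at `r`: `a` lies on the path from `r` to `u`. -/
def IsAncestor (a u : W) : Prop :=
  T.dist r a ≤ T.dist r u ∧ T.ancestor r u (T.dist r a) = a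

noncomputable def parent (u : W) : W := T.ancestor r u (T.dist r u - 1)

namespace IsTree

variable {T r}

theorem length_eq_dist (hT : T.IsTree) {u v : W} {p : T.Walk u v} (hp : p.IsPath) :
    p.length = T.dist u v := by
  obtain ⟨q, hq, hlen⟩ := hT.connected.exists_path_of_dist u v
  rw [(hT.existsUnique_path u v).unique hp hq, hlen]

theorem ancestor_eq_getVert (hT : T.IsTree) {u : W} {p : T.Walk r u} (hp : p.IsPath) (i : ℕ) :
    T.ancestor r u i = p.getVert i := by
  have hr : T.Reachable r u := ⟨p⟩
  rw [ancestor, dif_pos hr,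
    (hT.existsUnique_path r u).unique hr.exists_path_of_dist.choose_spec.1 hp]

theorem ancestor_zero (hT : T.IsTree) (u : W) : T.ancestor r u 0 = r := by
  obtain ⟨p, hp⟩ := (hT.existsUnique_path r u).exists
  rw [hT.ancestor_eq_getVert hp, Walk.getVert_zero]

theorem ancestor_dist (hT : T.IsTree) (u : W) : T.ancestor r u (T.dist r u) = u := by
  obtain ⟨p, hp⟩ := (hT.existsUnique_path r u).exists
  rw [hT.ancestor_eq_getVert hp, ← hT.length_eq_dist hp, Walk.getVert_length]

theorem dist_ancestor (hT : T.IsTree) {u : W} {i : ℕ} (hi : i ≤ T.dist r u) :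
    T.dist r (T.ancestor r u i) = i := by
  obtain ⟨p, hp⟩ := (hT.existsUnique_path r u).exists
  rw [hT.ancestor_eq_getVert hp, ← hT.length_eq_dist (hp.take i), Walk.take_length,
    hT.length_eq_dist hp, min_eq_left hi]

theorem ancestor_ancestor (hT : T.IsTree) (u : W) {i j : ℕ} (hij : i ≤ j) :
    T.ancestor r (T.ancestor r u j) i = T.ancestor r u i := by
  obtain ⟨p, hp⟩ := (hT.existsUnique_path r u).exists
  rw [hT.ancestor_eq_getVert hp j, hT.ancestor_eq_getVert (hp.take j), Walk.take_getVert,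
    min_eq_right hij, hT.ancestor_eq_getVert hp]

theorem isAncestor_ancestor (hT : T.IsTree) {u : W} {i : ℕ} (hi : i ≤ T.dist r u) :
    T.IsAncestor r (T.ancestor r u i) u :=
  ⟨(hT.dist_ancestor hi).trans_le hi, by rw [hT.dist_ancestor hi]⟩

theorem isAncestor_refl (hT : T.IsTree) (u : W) : T.IsAncestor r u u :=
  ⟨le_rfl, hT.ancestor_dist u⟩

theorem eq_of_isAncestor_of_dist_eq (hT : T.IsTree) {a u : W} (h : T.IsAncestor r a u)
    (hd : T.dist r a = T.dist r u) : a = u := by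
  rw [← h.2, hd, hT.ancestor_dist]

theorem eq_of_isAncestor_root (hT : T.IsTree) {a : W} (h : T.IsAncestor r a r) : a = r :=
  hT.eq_of_isAncestor_of_dist_eq h (le_antisymm h.1 (by simp))

theorem isAncestor_trans (hT : T.IsTree) {a b u : W} (hab : T.IsAncestor r a b)
    (hbu : T.IsAncestor r b u) : T.IsAncestor r a u :=
  ⟨hab.1.trans hbu.1, by rw [← hT.ancestor_ancestor u hab.1, hbu.2, hab.2]⟩

theorem isAncestor_of_isAncestor_of_dist_le (hT : T.IsTree) {a b w : W}
    (ha : T.IsAncestor r a w) (hb : T.IsAncestor r b w) (hab : T.dist r a ≤ T.dist r b) :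
    T.IsAncestor r a b :=
  ⟨hab, by rw [← hb.2, hT.ancestor_ancestor w hab, ha.2]⟩

theorem isAncestor_of_mem_support (hT : T.IsTree) {a u : W} {p : T.Walk r u} (hp : p.IsPath)
    (ha : a ∈ p.support) : T.IsAncestor r a u := by
  classical
  have hlen : (p.takeUntil a ha).length = T.dist r a := hT.length_eq_dist (hp.takeUntil ha)
  refine ⟨?_, ?_⟩
  · rw [← hlen, ← hT.length_eq_dist hp]
    exact p.length_takeUntil_le_length ha
  · rw [hT.ancestor_eq_getVert hp, ← hlen, p.getVert_length_takeUntil ha]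

theorem dist_parent (hT : T.IsTree) (u : W) : T.dist r (T.parent r u) = T.dist r u - 1 :=
  hT.dist_ancestor (Nat.sub_le _ _)

theorem isAncestor_parent (hT : T.IsTree) (u : W) : T.IsAncestor r (T.parent r u) u :=
  hT.isAncestor_ancestor (Nat.sub_le _ _)

theorem parent_eq_root (hT : T.IsTree) {u : W} (hu : T.dist r u = 1) : T.parent r u = r := by
  rw [parent, hu]
  exact hT.ancestor_zero u

theorem adj_parent (hT : T.IsTree) {u : W} (hu : 1 ≤ T.dist r u) : T.Adj (T.parent r u) u := by
  obtain ⟨p, hp⟩ := (hT.existsUnique_path r u).exists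
  have hlen := hT.length_eq_dist hp
  have hadj := p.adj_getVert_succ (i := T.dist r u - 1) (by omega)
  rwa [Nat.sub_add_cancel hu, ← hlen, p.getVert_length, hlen,
    ← hT.ancestor_eq_getVert hp] at hadj

theorem isAncestor_parent_iff (hT : T.IsTree) {a u : W} (hu : 1 ≤ T.dist r u) :
    T.IsAncestor r a (T.parent r u) ↔ T.IsAncestor r a u ∧ a ≠ u := by
  have hdist := hT.dist_parent (r := r) u
  constructor
  · intro ha
    refine ⟨hT.isAncestor_trans ha (hT.isAncestor_parent u), ?_⟩
    rintro rfl
    have := ha.1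
    omega
  · rintro ⟨ha, hne⟩
    have hlt : T.dist r a < T.dist r u :=
      lt_of_le_of_ne ha.1 fun h => hne (hT.eq_of_isAncestor_of_dist_eq ha h)
    exact hT.isAncestor_of_isAncestor_of_dist_le ha (hT.isAncestor_parent u) (by omega)

end IsTree

end RootedTree

section Coloring

variable {V α : Type*}

def ProperOff (G : SimpleGraph V) (S : Set V) (f : V → α) : Prop :=
  ∀ a b, G.Adj a b → a ∉ S → b ∉ S → f a ≠ f b

theorem ProperOff.mono {G : SimpleGraph V} {S S' : Set V} {f : V → α} (h : G.ProperOff S f)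
    (hSS' : S ⊆ S') : G.ProperOff S' f :=
  fun a b hab ha hb => h a b hab (fun h' => ha (hSS' h')) fun h' => hb (hSS' h')

theorem ProperOff.comp_injective {β : Type*} {G : SimpleGraph V} {S : Set V} {f : V → α}
    {σ : α → β} (h : G.ProperOff S f) (hσ : Injective σ) : G.ProperOff S (σ ∘ f) :=
  fun a b hab ha hb he => h a b hab ha hb (hσ he)

/-- `G` has no proper `α`-colouring, but `G - S` has one for every nonempty `S`. -/
def IsVertexCritical (G : SimpleGraph V) (α : Type*) : Prop :=
  ∀ S : Set V, (∃ f : V → α, G.ProperOff S f) ↔ S.Nonempty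

theorem _root_.IsCritical.isVertexCritical {k : ℕ} {G : SimpleGraph V} (hG : IsCritical k G)
    (hk : 2 ≤ k) : G.IsVertexCritical (Fin (k - 1)) := by
  intro S
  constructor
  · rintro ⟨f, hf⟩
    rw [Set.nonempty_iff_ne_empty]
    rintro rfl
    exact hG.1 ⟨Coloring.mk f fun hab => hf _ _ hab (Set.notMem_empty _) (Set.notMem_empty _)⟩
  · rintro ⟨s, hs⟩
    have hH : (⊤ : G.Subgraph).induce Sᶜ ≠ ⊤ := fun h => by
      simpa [hs] using congrArg (s ∈ ·.verts) h
    obtain ⟨C⟩ := hG.2 _ hH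
    classical
    refine ⟨fun v => if h : v ∈ Sᶜ then C ⟨v, h⟩ else ⟨0, by omega⟩, fun a b hab ha hb => ?_⟩
    have hadj : ((⊤ : G.Subgraph).induce Sᶜ).coe.Adj ⟨a, ha⟩ ⟨b, hb⟩ := ⟨ha, hb, hab⟩
    simpa [ha, hb] using C.valid hadj

end Coloring

section DFSTree

open scoped Classical

variable {V α : Type*} {X : Finset V} (G : SimpleGraph V) (T : SimpleGraph {x // x ∉ X})
  (r : {x // x ∉ X})

/-- The DFS property of `T` with respect to `G`; that `T` is a spanning tree is not part of it. -/
def IsDFSTree : Prop :=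
  ∀ x y : {x // x ∉ X}, G.Adj x y → T.IsAncestor r x y ∨ T.IsAncestor r y x

def descendants (u : {x // x ∉ X}) : Set V := Subtype.val '' {w | T.IsAncestor r u w}

/-- For `u ≠ r`, the ancestors of `parent u` are the proper ancestors of `u`. -/
def boundary (u : {x // x ∉ X}) : Set V :=
  ↑X ∪ Subtype.val '' {a | T.IsAncestor r a (T.parent r u)}

/-- The traces on `boundary T r u` (extended by `c₀`) of the colourings of `G - descendants T r u`
that give the root colour `c₀` and, below depth one, the depth-one ancestor of `u` colour `c₁`. -/
noncomputable def boundaryColorings [Fintype V] [Fintype α] (c₀ c₁ : α) (u : {x // x ∉ X}) :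
    Finset (V → α) :=
  {θ | ∃ f : V → α, G.ProperOff (descendants T r u) f ∧ f r = c₀ ∧
    (2 ≤ T.dist r u → f (T.ancestor r u 1) = c₁) ∧
    θ = (boundary T r u).piecewise f fun _ => c₀}

noncomputable def levelSum [Fintype V] [Fintype α] (c₀ c₁ : α) (j : ℕ) : ℕ :=
  ∑ u with T.dist r u = j, #(G.boundaryColorings T r c₀ c₁ u)

variable {G T r}

theorem notMem_descendants_of_dist_lt {u a : {x // x ∉ X}} (h : T.dist r a < T.dist r u) :
    a.1 ∉ descendants T r u := by
  rintro ⟨w, hw, hwa⟩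
  obtain rfl := Subtype.ext hwa
  exact absurd hw.1 (by omega)

theorem descendants_subset (hT : T.IsTree) {a u : {x // x ∉ X}} (h : T.IsAncestor r a u) :
    descendants T r u ⊆ descendants T r a := by
  rintro _ ⟨w, hw, rfl⟩
  exact ⟨w, hT.isAncestor_trans h hw, rfl⟩

theorem disjoint_descendants (hT : T.IsTree) {u u' : {x // x ∉ X}} (hne : u ≠ u')
    (hd : T.dist r u = T.dist r u') : Disjoint (descendants T r u) (descendants T r u') := by
  rw [Set.disjoint_left]
  rintro _ ⟨w, hw, rfl⟩ ⟨w', hw', hww'⟩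
  obtain rfl := Subtype.ext hww'
  exact hne (hT.eq_of_isAncestor_of_dist_eq
    (hT.isAncestor_of_isAncestor_of_dist_le hw hw' hd.le) hd)

theorem disjoint_boundary_descendants (hT : T.IsTree) {u u' : {x // x ∉ X}}
    (hu : 1 ≤ T.dist r u) (hd : T.dist r u ≤ T.dist r u') :
    Disjoint (boundary T r u) (descendants T r u') := by
  rw [Set.disjoint_left]
  rintro _ (hX | ⟨a, ha, rfl⟩)
  · rintro ⟨w, -, rfl⟩
    exact w.2 hX
  · have := ha.1
    have := hT.dist_parent (r := r) u
    exact notMem_descendants_of_dist_lt (by omega)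

theorem parent_mem_boundary (hT : T.IsTree) (u : {x // x ∉ X}) :
    (T.parent r u).1 ∈ boundary T r u :=
  Or.inr ⟨_, hT.isAncestor_refl _, rfl⟩

theorem boundary_parent_subset (hT : T.IsTree) (u : {x // x ∉ X}) :
    boundary T r (T.parent r u) ⊆ boundary T r u :=
  Set.union_subset_union_right _ <|
    Set.image_mono fun _ ha => hT.isAncestor_trans ha (hT.isAncestor_parent _)

theorem boundary_eq_insert_parent (hT : T.IsTree) {u : {x // x ∉ X}} (hu : 2 ≤ T.dist r u) :
    boundary T r u = insert (T.parent r u).1 (boundary T r (T.parent r u)) := by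
  have hz : 1 ≤ T.dist r (T.parent r u) := by rw [hT.dist_parent]; omega
  refine Set.Subset.antisymm ?_
    (Set.insert_subset (parent_mem_boundary hT u) (boundary_parent_subset hT u))
  rintro _ (hX | ⟨a, ha, rfl⟩)
  · exact Or.inr (Or.inl hX)
  · by_cases h : a = T.parent r u
    · exact Or.inl (congrArg _ h)
    · exact Or.inr (Or.inr ⟨a, (hT.isAncestor_parent_iff hz).2 ⟨ha, h⟩, rfl⟩)

theorem mem_descendants_or_boundary_of_adj (hT : T.IsTree)
    (hdfs : G.IsDFSTree T r)
    {u : {x // x ∉ X}} {a b : V} (ha : a ∈ descendants T r u) (hab : G.Adj a b) :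
    b ∈ descendants T r u ∪ boundary T r u := by
  obtain ⟨w, hw, rfl⟩ := ha
  by_cases hbX : b ∈ X
  · exact Or.inr (Or.inl hbX)
  set w' : {x // x ∉ X} := ⟨b, hbX⟩
  rcases hdfs w w' hab with h | h
  · exact Or.inl ⟨w', hT.isAncestor_trans hw h, rfl⟩
  rcases le_or_gt (T.dist r u) (T.dist r w') with hle | hlt
  · exact Or.inl ⟨w', hT.isAncestor_of_isAncestor_of_dist_le hw h hle, rfl⟩
  · refine Or.inr (Or.inr ⟨w', (hT.isAncestor_parent_iff (by omega)).2
      ⟨hT.isAncestor_of_isAncestor_of_dist_le h hw hlt.le, ?_⟩, rfl⟩)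
    rintro rfl
    exact lt_irrefl _ hlt

/-- By the DFS property the subtree of `u` meets the rest of `G` only in `boundary T r u`,
so `g` on that subtree and `f` elsewhere glue to a colouring of `G`. -/
theorem exists_properOff_empty_of_eqOn (hT : T.IsTree)
    (hdfs : G.IsDFSTree T r)
    {u u' : {x // x ∉ X}} (hu : 1 ≤ T.dist r u) (hne : u ≠ u') (hd : T.dist r u = T.dist r u')
    {f g : V → α} (hf : G.ProperOff (descendants T r u) f) (hg : G.ProperOff (descendants T r u') g)
    (hfg : Set.EqOn f g (boundary T r u)) : ∃ h : V → α, G.ProperOff ∅ h := by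
  set D := descendants T r u
  have hgood : ∀ v ∈ D ∪ boundary T r u, v ∉ descendants T r u' := by
    rintro v (hv | hv)
    · exact Set.disjoint_left.1 (disjoint_descendants hT hne hd) hv
    · exact Set.disjoint_left.1 (disjoint_boundary_descendants hT hu hd.le) hv
  have hagree : ∀ v ∈ D ∪ boundary T r u, D.piecewise g f v = g v := by
    rintro v (hv | hv)
    · exact Set.piecewise_eq_of_mem _ _ _ hv
    · rw [Set.piecewise_eq_of_notMem _ _ _
        (Set.disjoint_left.1 (disjoint_boundary_descendants hT hu le_rfl) hv), hfg hv]
  refine ⟨D.piecewise g f, fun a b hab _ _ => ?_⟩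
  by_cases hD : a ∈ D ∨ b ∈ D
  · have hab' : a ∈ D ∪ boundary T r u ∧ b ∈ D ∪ boundary T r u := by
      rcases hD with ha | hb
      · exact ⟨Or.inl ha, mem_descendants_or_boundary_of_adj hT hdfs ha hab⟩
      · exact ⟨mem_descendants_or_boundary_of_adj hT hdfs hb hab.symm, Or.inl hb⟩
    rw [hagree a hab'.1, hagree b hab'.2]
    exact hg a b hab (hgood a hab'.1) (hgood b hab'.2)
  · rw [not_or] at hD
    rw [Set.piecewise_eq_of_notMem _ _ _ hD.1, Set.piecewise_eq_of_notMem _ _ _ hD.2]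
    exact hf a b hab hD.1 hD.2

variable [Fintype V] [Fintype α] {c₀ c₁ : α}

theorem mem_boundaryColorings {u : {x // x ∉ X}} {θ : V → α} :
    θ ∈ G.boundaryColorings T r c₀ c₁ u ↔ ∃ f : V → α, G.ProperOff (descendants T r u) f ∧
      f r = c₀ ∧ (2 ≤ T.dist r u → f (T.ancestor r u 1) = c₁) ∧
      θ = (boundary T r u).piecewise f fun _ => c₀ := by
  simp [boundaryColorings]

theorem apply_eq_of_notMem_boundary {u : {x // x ∉ X}} {θ : V → α}
    (hθ : θ ∈ G.boundaryColorings T r c₀ c₁ u) {v : V} (hv : v ∉ boundary T r u) : θ v = c₀ := by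
  obtain ⟨f, -, -, -, rfl⟩ := mem_boundaryColorings.1 hθ
  exact Set.piecewise_eq_of_notMem _ _ _ hv

theorem boundaryColorings_nonempty (hT : T.IsTree) (hcrit : G.IsVertexCritical α)
    (hsub : ∀ x y, T.Adj x y → G.Adj x y) (h01 : c₀ ≠ c₁) {u : {x // x ∉ X}}
    (hu : 1 ≤ T.dist r u) : (G.boundaryColorings T r c₀ c₁ u).Nonempty := by
  obtain ⟨f, hf⟩ := (hcrit (descendants T r u)).2 ⟨u, u, hT.isAncestor_refl u, rfl⟩
  have hr : r.1 ∉ descendants T r u := notMem_descendants_of_dist_lt (by rw [dist_self]; omega)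
  suffices ∃ σ : Equiv.Perm α, σ (f r) = c₀ ∧ (2 ≤ T.dist r u → σ (f (T.ancestor r u 1)) = c₁) by
    obtain ⟨σ, hσ₀, hσ₁⟩ := this
    exact ⟨_, mem_boundaryColorings.2 ⟨σ ∘ f, hf.comp_injective σ.injective, hσ₀, hσ₁, rfl⟩⟩
  rcases lt_or_ge (T.dist r u) 2 with h1 | h2
  · exact ⟨Equiv.swap (f r) c₀, Equiv.swap_apply_left _ _, fun h => absurd h (by omega)⟩
  set a := T.ancestor r u 1
  have hda : T.dist r a = 1 := hT.dist_ancestor (by omega)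
  have hadj : G.Adj r a := by
    have := hsub _ _ (hT.adj_parent (r := r) hda.ge)
    rwa [hT.parent_eq_root hda] at this
  have ha : a.1 ∉ descendants T r u := notMem_descendants_of_dist_lt (by omega)
  obtain ⟨σ, hσ₀, hσ₁⟩ := Equiv.Perm.exists_apply_eq_apply_eq (hf _ _ hadj hr ha) h01
  exact ⟨σ, hσ₀, fun _ => hσ₁⟩

theorem disjoint_boundaryColorings (hT : T.IsTree) (hcrit : G.IsVertexCritical α)
    (hdfs : G.IsDFSTree T r)
    {u u' : {x // x ∉ X}} (hu : 1 ≤ T.dist r u) (hu' : 1 ≤ T.dist r u')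
    (hpar : T.parent r u = T.parent r u') (hne : u ≠ u') :
    Disjoint (G.boundaryColorings T r c₀ c₁ u) (G.boundaryColorings T r c₀ c₁ u') := by
  rw [Finset.disjoint_left]
  intro θ hθ hθ'
  obtain ⟨f, hf, -, -, rfl⟩ := mem_boundaryColorings.1 hθ
  obtain ⟨g, hg, -, -, hfg⟩ := mem_boundaryColorings.1 hθ'
  have hd : T.dist r u = T.dist r u' := by
    have := hT.dist_parent (r := r) u
    have := hT.dist_parent (r := r) u'
    rw [hpar] at *
    omega
  have hB : boundary T r u' = boundary T r u := by rw [boundary, boundary, hpar]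
  rw [hB] at hfg
  obtain ⟨h, hh⟩ := exists_properOff_empty_of_eqOn hT hdfs hu hne hd hf hg fun v hv => by
    simpa [Set.piecewise_eq_of_mem _ _ _ hv] using congrFun hfg v
  exact Set.not_nonempty_empty ((hcrit ∅).1 ⟨h, hh⟩)

theorem piecewise_mem_boundaryColorings_parent (hT : T.IsTree) {u : {x // x ∉ X}}
    (hu : 2 ≤ T.dist r u) {θ : V → α} (hθ : θ ∈ G.boundaryColorings T r c₀ c₁ u) :
    (boundary T r (T.parent r u)).piecewise θ (fun _ => c₀) ∈
      G.boundaryColorings T r c₀ c₁ (T.parent r u) := by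
  obtain ⟨f, hf, hf₀, hf₁, rfl⟩ := mem_boundaryColorings.1 hθ
  refine mem_boundaryColorings.2 ⟨f, hf.mono (descendants_subset hT (hT.isAncestor_parent u)),
    hf₀, fun h2 => ?_, Set.piecewise_piecewise_of_subset (boundary_parent_subset hT u) _ _⟩
  rw [hT.dist_parent] at h2
  rw [parent, hT.ancestor_ancestor u (by omega)]
  exact hf₁ hu

theorem eq_update_piecewise_parent (hT : T.IsTree) {u : {x // x ∉ X}} (hu : 2 ≤ T.dist r u)
    {θ : V → α} (hθ : θ ∈ G.boundaryColorings T r c₀ c₁ u) :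
    θ = update ((boundary T r (T.parent r u)).piecewise θ fun _ => c₀) (T.parent r u).1
      (θ (T.parent r u)) := by
  funext v
  by_cases hvz : v = (T.parent r u).1
  · subst hvz
    rw [update_self]
  rw [update_of_ne hvz]
  by_cases hv : v ∈ boundary T r (T.parent r u)
  · rw [Set.piecewise_eq_of_mem _ _ _ hv]
  · rw [Set.piecewise_eq_of_notMem _ _ _ hv]
    refine apply_eq_of_notMem_boundary hθ ?_
    rw [boundary_eq_insert_parent hT hu]
    rintro (h | h)
    exacts [hvz h, hv h]

theorem apply_eq_of_notMem_of_dist_eq_one (hT : T.IsTree) {u : {x // x ∉ X}}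
    (hu : T.dist r u = 1) {θ : V → α} (hθ : θ ∈ G.boundaryColorings T r c₀ c₁ u) {v : V}
    (hv : v ∉ X) : θ v = c₀ := by
  by_cases hvB : v ∈ boundary T r u
  · obtain ⟨f, -, hf₀, -, rfl⟩ := mem_boundaryColorings.1 hθ
    obtain ⟨a, ha, rfl⟩ := hvB.resolve_left hv
    rw [Set.mem_ofPred_eq, hT.parent_eq_root hu] at ha
    rw [Set.piecewise_eq_of_mem _ _ _ hvB, hT.eq_of_isAncestor_root ha, hf₀]
  · exact apply_eq_of_notMem_boundary hθ hvB

theorem apply_parent_of_dist_eq_two (hT : T.IsTree) {u : {x // x ∉ X}} (hu : T.dist r u = 2)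
    {θ : V → α} (hθ : θ ∈ G.boundaryColorings T r c₀ c₁ u) : θ (T.parent r u) = c₁ := by
  obtain ⟨f, -, -, hf₁, rfl⟩ := mem_boundaryColorings.1 hθ
  rw [Set.piecewise_eq_of_mem _ _ _ (parent_mem_boundary hT u), parent, hu]
  exact hf₁ hu.ge

theorem apply_parent_ne (hT : T.IsTree) (hsub : ∀ x y, T.Adj x y → G.Adj x y)
    {u : {x // x ∉ X}} (hu : 3 ≤ T.dist r u) {θ : V → α}
    (hθ : θ ∈ G.boundaryColorings T r c₀ c₁ u) :
    θ (T.parent r u) ≠ θ (T.parent r (T.parent r u)) := by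
  obtain ⟨f, hf, -, -, rfl⟩ := mem_boundaryColorings.1 hθ
  have hz := hT.dist_parent (r := r) u
  have hzz := hT.dist_parent (r := r) (T.parent r u)
  rw [Set.piecewise_eq_of_mem _ _ _ (parent_mem_boundary hT u), Set.piecewise_eq_of_mem _ _ _
    (boundary_parent_subset hT u (parent_mem_boundary hT _))]
  exact hf _ _ (hsub _ _ (hT.adj_parent (by omega))).symm
    (notMem_descendants_of_dist_lt (by omega)) (notMem_descendants_of_dist_lt (by omega))

theorem ncard_level_le_levelSum (hT : T.IsTree) (hcrit : G.IsVertexCritical α)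
    (hsub : ∀ x y, T.Adj x y → G.Adj x y) (h01 : c₀ ≠ c₁) {j : ℕ} (hj : 1 ≤ j) :
    {u | T.dist r u = j}.ncard ≤ G.levelSum T r c₀ c₁ j := by
  rw [Set.ncard_eq_toFinset_card', Set.toFinset_ofPred, card_eq_sum_ones, levelSum]
  refine sum_le_sum fun u hu => ?_
  rw [mem_filter] at hu
  exact (boundaryColorings_nonempty hT hcrit hsub h01 (hu.2 ▸ hj)).card_pos

theorem levelSum_one_le (hT : T.IsTree) (hcrit : G.IsVertexCritical α)
    (hdfs : G.IsDFSTree T r) :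
    G.levelSum T r c₀ c₁ 1 ≤ Fintype.card α ^ #X := by
  have hdisj : ((univ.filter fun u => T.dist r u = 1 : Finset _) : Set _).PairwiseDisjoint
      (G.boundaryColorings T r c₀ c₁) := by
    intro u hu u' hu' hne
    simp only [coe_filter, mem_univ, true_and, Set.mem_ofPred_eq] at hu hu'
    exact disjoint_boundaryColorings hT hcrit hdfs hu.ge hu'.ge
      (by rw [hT.parent_eq_root hu, hT.parent_eq_root hu']) hne
  rw [levelSum, ← card_biUnion hdisj]
  calc _ ≤ #(univ : Finset (X → α)) := by
        refine card_le_card_of_injOn (fun θ (x : X) => θ x) (fun _ _ => mem_coe.2 (mem_univ _)) ?_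
        intro θ hθ θ' hθ' hX
        obtain ⟨u, hu, hθ⟩ := mem_biUnion.1 hθ
        obtain ⟨u', hu', hθ'⟩ := mem_biUnion.1 hθ'
        funext v
        by_cases hv : v ∈ X
        · exact congrFun hX ⟨v, hv⟩
        · rw [apply_eq_of_notMem_of_dist_eq_one hT (mem_filter.1 hu).2 hθ hv,
            apply_eq_of_notMem_of_dist_eq_one hT (mem_filter.1 hu').2 hθ' hv]
    _ = Fintype.card α ^ #X := by simp

theorem sum_card_children_le (hT : T.IsTree) (hcrit : G.IsVertexCritical α)
    (hdfs : G.IsDFSTree T r)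
    {z : {x // x ∉ X}} {d n : ℕ} (hz : T.dist r z = d) (hd : 1 ≤ d)
    (allowed : (V → α) → Finset α) (hn : ∀ η, #(allowed η) ≤ n)
    (hval : ∀ u, T.dist r u = d + 1 → T.parent r u = z → ∀ θ ∈ G.boundaryColorings T r c₀ c₁ u,
      θ z ∈ allowed ((boundary T r z).piecewise θ fun _ => c₀)) :
    ∑ u ∈ univ.filter (fun u => T.dist r u = d + 1) with T.parent r u = z,
      #(G.boundaryColorings T r c₀ c₁ u) ≤ n * #(G.boundaryColorings T r c₀ c₁ z) := by
  have hC : ∀ u ∈ (univ.filter fun u => T.dist r u = d + 1).filter (T.parent r · = z),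
      T.dist r u = d + 1 ∧ T.parent r u = z := by
    simp
  rw [← card_biUnion fun u hu u' hu' hne => disjoint_boundaryColorings hT hcrit hdfs
    (by have := hC u hu; omega) (by have := hC u' hu'; omega)
    ((hC u hu).2.trans (hC u' hu').2.symm) hne]
  refine card_le_mul_card_of_injOn_prod (fun θ => (boundary T r z).piecewise θ fun _ => c₀)
    (fun θ => θ z) allowed ?_ ?_ (fun η _ => hn η) ?_
  · intro θ hθ
    obtain ⟨u, hu, hθu⟩ := mem_biUnion.1 hθ
    obtain ⟨hdu, rfl⟩ := hC u hu
    exact piecewise_mem_boundaryColorings_parent hT (by omega) hθu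
  · intro θ hθ
    obtain ⟨u, hu, hθu⟩ := mem_biUnion.1 hθ
    exact hval u (hC u hu).1 (hC u hu).2 θ hθu
  · intro θ hθ θ' hθ' hη hθz
    obtain ⟨u, hu, hθu⟩ := mem_biUnion.1 hθ
    obtain ⟨u', hu', hθu'⟩ := mem_biUnion.1 hθ'
    obtain ⟨hdu, rfl⟩ := hC u hu
    obtain ⟨hdu', hpar⟩ := hC u' hu'
    rw [eq_update_piecewise_parent hT (by omega) hθu,
      eq_update_piecewise_parent hT (by omega) hθu', hpar]
    exact congrArg₂ (update · _ ·) hη hθz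

theorem levelSum_succ_le (hT : T.IsTree) (hcrit : G.IsVertexCritical α)
    (hdfs : G.IsDFSTree T r)
    {d n : ℕ} (hd : 1 ≤ d) (allowed : {x // x ∉ X} → (V → α) → Finset α)
    (hn : ∀ z η, #(allowed z η) ≤ n)
    (hval : ∀ u, T.dist r u = d + 1 → ∀ θ ∈ G.boundaryColorings T r c₀ c₁ u,
      θ (T.parent r u) ∈
        allowed (T.parent r u) ((boundary T r (T.parent r u)).piecewise θ fun _ => c₀)) :
    G.levelSum T r c₀ c₁ (d + 1) ≤ n * G.levelSum T r c₀ c₁ d := by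
  have hmaps : ∀ u ∈ univ.filter fun u => T.dist r u = d + 1,
      T.parent r u ∈ univ.filter fun z => T.dist r z = d := by
    intro u hu
    rw [mem_filter] at hu ⊢
    exact ⟨mem_univ _, by rw [hT.dist_parent, hu.2, Nat.add_sub_cancel]⟩
  rw [levelSum, levelSum, mul_sum, ← sum_fiberwise_of_maps_to hmaps]
  refine sum_le_sum fun z hz => sum_card_children_le hT hcrit hdfs (mem_filter.1 hz).2 hd
    (allowed z) (hn z) fun u hu hpar θ hθ => ?_
  subst hpar
  exact hval u hu θ hθ

theorem levelSum_two_le (hT : T.IsTree) (hcrit : G.IsVertexCritical α)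
    (hdfs : G.IsDFSTree T r) :
    G.levelSum T r c₀ c₁ 2 ≤ G.levelSum T r c₀ c₁ 1 := by
  simpa using levelSum_succ_le hT hcrit hdfs le_rfl (n := 1) (fun _ _ => {c₁})
    (fun _ _ => (card_singleton _).le)
    fun u hu θ hθ => mem_singleton.2 (apply_parent_of_dist_eq_two hT hu hθ)

theorem levelSum_succ_le_of_two_le (hT : T.IsTree) (hcrit : G.IsVertexCritical α)
    (hsub : ∀ x y, T.Adj x y → G.Adj x y)
    (hdfs : G.IsDFSTree T r)
    {d : ℕ} (hd : 2 ≤ d) :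
    G.levelSum T r c₀ c₁ (d + 1) ≤ (Fintype.card α - 1) * G.levelSum T r c₀ c₁ d := by
  refine levelSum_succ_le hT hcrit hdfs (by omega) (fun z η => univ.erase (η (T.parent r z)))
    (fun _ _ => by rw [card_erase_of_mem (mem_univ _), card_univ]) fun u hu θ hθ => ?_
  refine mem_erase.2 ⟨?_, mem_univ _⟩
  rw [Set.piecewise_eq_of_mem _ _ _ (parent_mem_boundary hT _)]
  exact apply_parent_ne hT hsub (by omega) hθ

theorem levelSum_le (hT : T.IsTree) (hcrit : G.IsVertexCritical α)
    (hsub : ∀ x y, T.Adj x y → G.Adj x y)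
    (hdfs : G.IsDFSTree T r)
    {j : ℕ} (hj : 2 ≤ j) :
    G.levelSum T r c₀ c₁ j ≤ (Fintype.card α - 1) ^ (j - 2) * Fintype.card α ^ #X := by
  induction j, hj using Nat.le_induction with
  | base => simpa using (levelSum_two_le hT hcrit hdfs).trans (levelSum_one_le hT hcrit hdfs)
  | succ d hd ih =>
    calc _ ≤ (Fintype.card α - 1) * G.levelSum T r c₀ c₁ d :=
          levelSum_succ_le_of_two_le hT hcrit hsub hdfs hd
      _ ≤ (Fintype.card α - 1) * ((Fintype.card α - 1) ^ (d - 2) * Fintype.card α ^ #X) := by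
          gcongr
      _ = _ := by rw [show d + 1 - 2 = d - 2 + 1 by omega, pow_succ]; ring

end DFSTree

end SimpleGraph

theorem stmt3_general (k : ℕ) (hk : 4 ≤ k)
    (V : Type) [Fintype V] (G : SimpleGraph V) (hG : IsCritical k G)
    (X : Finset V) (s : ℕ) (hX : X.card = s)
    -- `T` is a spanning tree of `G ∖ X`, the graph obtained from `G` by deleting `X` ...
    (T : SimpleGraph {x : V // x ∉ X}) (htree : T.IsTree)
    (hsub : T ≤ G.induce {x : V | x ∉ X})
    -- ... which is a DFS tree rooted at `t₀` :
    (t₀ : {x : V // x ∉ X})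
    (hdfs : ∀ x y : {x : V // x ∉ X}, (G.induce {x : V | x ∉ X}).Adj x y →
      (∃ p : T.Walk t₀ y, p.IsPath ∧ x ∈ p.support) ∨
      (∃ p : T.Walk t₀ x, p.IsPath ∧ y ∈ p.support)) :
    ∀ j : ℕ, 1 ≤ j →
      (j = 1 → {t : {x : V // x ∉ X} | T.dist t₀ t = j}.ncard ≤ (k - 1) ^ s) ∧
      (2 ≤ j → {t : {x : V // x ∉ X} | T.dist t₀ t = j}.ncard
        ≤ (k - 2) ^ (j - 2) * (k - 1) ^ s) := by
  have hcrit := hG.isVertexCritical (by omega)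
  have hsub' : ∀ x y, T.Adj x y → G.Adj x y := fun _ _ h => hsub h
  have hdfs' : G.IsDFSTree T t₀ :=
    fun x y h => (hdfs x y h).imp (fun ⟨_, hp, hx⟩ => htree.isAncestor_of_mem_support hp hx)
      fun ⟨_, hp, hy⟩ => htree.isAncestor_of_mem_support hp hy
  have h01 : (⟨0, by omega⟩ : Fin (k - 1)) ≠ ⟨1, by omega⟩ := by simp
  intro j hj
  subst hX
  refine ⟨fun hj1 => ?_, fun hj2 => ?_⟩
  · subst hj1
    calc _ ≤ _ := ncard_level_le_levelSum htree hcrit hsub' h01 le_rfl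
      _ ≤ _ := (levelSum_one_le htree hcrit hdfs').trans_eq (by simp)
  · calc _ ≤ _ := ncard_level_le_levelSum htree hcrit hsub' h01 hj
      _ ≤ _ := (levelSum_le htree hcrit hsub' hdfs' hj2).trans_eq (by simp [Nat.sub_sub])

theorem stmt3 (k : ℕ) (hk : 4 ≤ k)
    (V : Type) [Fintype V] [DecidableEq V] (G : SimpleGraph V) (hG : IsCritical k G)
    (X : Finset V) (s : ℕ) (hX : X.card = s)
    -- `T` is a spanning tree of `G ∖ X`, the graph obtained from `G` by deleting `X` ...
    (T : SimpleGraph {x : V // x ∉ X}) (htree : T.IsTree)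
    (hsub : T ≤ G.induce {x : V | x ∉ X})
    -- ... which is a DFS tree rooted at `t₀` :
    (t₀ : {x : V // x ∉ X})
    (hdfs : ∀ x y : {x : V // x ∉ X}, (G.induce {x : V | x ∉ X}).Adj x y →
      (∃ p : T.Walk t₀ y, p.IsPath ∧ x ∈ p.support) ∨
      (∃ p : T.Walk t₀ x, p.IsPath ∧ y ∈ p.support)) :
    ∀ j : ℕ, 1 ≤ j →
      (j = 1 → {t : {x : V // x ∉ X} | T.dist t₀ t = j}.ncard ≤ (k - 1) ^ s) ∧
      (2 ≤ j → {t : {x : V // x ∉ X} | T.dist t₀ t = j}.ncard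
        ≤ (k - 2) ^ (j - 2) * (k - 1) ^ s) :=
  stmt3_general k hk V G hG X s hX T htree hsub t₀ hdfs
end

section
/- Let k ≥ 4 be an integer, let G be a k-critical graph, and let u, v be distinct vertices of G such that the graph G∖{u,v} obtained by deleting u and v is disconnected. Then u and v are not adjacent in G, and G∖{u,v} has exactly two connected components. -/
/-!
For a component `C` of `G - {u, v}`, the lobe `G[C ∪ {u, v}]` is a proper
induced subgraph, hence `(k-1)`-colourable; after permuting colours, colourings of different lobes
that agree on `u` and `v` glue to a colouring of `G`. As `G` is not `(k-1)`-colourable, some lobe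
forces `u` and `v` to get equal colours in every colouring, and some lobe forces different colours.
This already rules out the edge `uv`. A third component `C'` would leave both of these lobes inside
the proper induced subgraph `G - C'`, whose colourings would then have to satisfy both constraints.
-/

open SimpleGraph

open Set

theorem Equiv.exists_perm_apply_eq_and_apply_eq {α : Type*} {x y a b : α} (h : x = y ↔ a = b) :
    ∃ σ : Equiv.Perm α, σ x = a ∧ σ y = b := by
  classical
  by_cases hxy : x = y
  · subst hxy
    exact ⟨Equiv.swap x a, Equiv.swap_apply_left x a, (h.mp rfl) ▸ Equiv.swap_apply_left x a⟩
  · have hab : a ≠ b := fun hab => hxy (h.mpr hab)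
    have hya : Equiv.swap x a y ≠ a := fun hya =>
      hxy ((Equiv.swap x a).injective (hya.trans (Equiv.swap_apply_left x a).symm)).symm
    refine ⟨(Equiv.swap x a).trans (Equiv.swap (Equiv.swap x a y) b), ?_, ?_⟩
    · simp only [Equiv.trans_apply, Equiv.swap_apply_left]
      exact Equiv.swap_apply_of_ne_of_ne hya.symm hab
    · simp only [Equiv.trans_apply, Equiv.swap_apply_left]

namespace SimpleGraph

theorem Coloring.exists_apply_eq_and_apply_eq {W α : Type*} {H : SimpleGraph W}
    (f : H.Coloring α) {x y : W} {a b : α} (h : f x = f y ↔ a = b) :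
    ∃ f' : H.Coloring α, f' x = a ∧ f' y = b := by
  obtain ⟨σ, hσx, hσy⟩ := Equiv.exists_perm_apply_eq_and_apply_eq h
  exact ⟨Coloring.mk (σ ∘ f) fun hxy => σ.injective.ne (f.valid hxy), hσx, hσy⟩

theorem ConnectedComponent.exists_ne_of_not_connected {W : Type*} {H : SimpleGraph W}
    (hH : ¬ H.Connected) (c : H.ConnectedComponent) : ∃ c', c' ≠ c := by
  by_contra! h
  obtain ⟨x, rfl⟩ := c.exists_rep
  exact hH <| (connected_iff_exists_forall_reachable H).mpr
    ⟨x, fun w => ConnectedComponent.exact (h _).symm⟩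

variable {V : Type*} {G : SimpleGraph V} {u v : V}

variable (G u v) in
/-- The vertices of the components `Γ` of `G - {u, v}`, together with `u` and `v`, which satisfy
the condition vacuously. -/
def lobe (Γ : Set (G.induce ({u, v}ᶜ : Set V)).ConnectedComponent) : Set V :=
  {w | ∀ hw : w ∈ ({u, v}ᶜ : Set V), (G.induce _).connectedComponentMk ⟨w, hw⟩ ∈ Γ}

section Lobe

variable {Γ Δ : Set (G.induce ({u, v}ᶜ : Set V)).ConnectedComponent}

theorem left_mem_lobe : u ∈ G.lobe u v Γ := fun hu => (hu (by simp)).elim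

theorem right_mem_lobe : v ∈ G.lobe u v Γ := fun hv => (hv (by simp)).elim

theorem lobe_mono (h : Γ ⊆ Δ) : G.lobe u v Γ ⊆ G.lobe u v Δ := fun _ hw hS => h (hw hS)

theorem lobe_ne_univ {c} (hc : c ∉ Γ) : G.lobe u v Γ ≠ univ := by
  intro h
  obtain ⟨⟨w, hS⟩, rfl⟩ := c.exists_rep
  exact hc ((h.symm ▸ mem_univ w : w ∈ G.lobe u v Γ) hS)

theorem mem_lobe_of_adj {w x : V} (hw : w ∈ ({u, v}ᶜ : Set V)) (hwx : G.Adj w x) :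
    x ∈ G.lobe u v {(G.induce _).connectedComponentMk ⟨w, hw⟩} := fun hx =>
  ConnectedComponent.sound (show (G.induce _).Adj ⟨x, hx⟩ ⟨w, hw⟩ from hwx.symm).reachable

end Lobe

section Gluing

variable {α : Type*}

-- Every edge of `G` other than `uv` lies in a single-component lobe.
theorem nonempty_coloring_of_lobes (huv : u ≠ v) {a b : α} (hab : G.Adj u v → a ≠ b)
    (f : ∀ c, (G.induce (G.lobe u v {c})).Coloring α)
    (hfu : ∀ c, f c ⟨u, left_mem_lobe⟩ = a) (hfv : ∀ c, f c ⟨v, right_mem_lobe⟩ = b) :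
    Nonempty (G.Coloring α) := by
  classical
  set S : Set V := {u, v}ᶜ
  let g : V → α := fun w =>
    if hw : w ∈ S then f ((G.induce S).connectedComponentMk ⟨w, hw⟩) ⟨w, fun _ => rfl⟩
    else if w = u then a else b
  have hgu : g u = a := by simp [g, S]
  have hgv : g v = b := by simp [g, S, huv.symm]
  have hg : ∀ c w (hw : w ∈ G.lobe u v {c}), g w = f c ⟨w, hw⟩ := by
    intro c w hw
    by_cases hS : w ∈ S
    · obtain rfl : _ = c := hw hS
      exact dif_pos hS
    · obtain rfl | rfl : w = u ∨ w = v := not_not.mp hS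
      · rw [hgu, hfu]
      · rw [hgv, hfv]
  have hvalid : ∀ w x, G.Adj w x → w ∈ S → g w ≠ g x := by
    intro w x hwx hw
    rw [hg ((G.induce S).connectedComponentMk ⟨w, hw⟩) w fun _ => rfl,
      hg _ x (mem_lobe_of_adj hw hwx)]
    exact (f _).valid hwx
  refine ⟨Coloring.mk g fun {w x} hwx => ?_⟩
  by_cases hw : w ∈ S
  · exact hvalid w x hwx hw
  by_cases hx : x ∈ S
  · exact (hvalid x w hwx.symm hx).symm
  rcases not_not.mp hw with rfl | rfl <;> rcases not_not.mp hx with rfl | rfl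
  · exact absurd hwx G.irrefl
  · rw [hgu, hgv]; exact hab hwx
  · rw [hgu, hgv]; exact (hab hwx.symm).symm
  · exact absurd hwx G.irrefl

theorem nonempty_coloring_of_forall_lobe (huv : u ≠ v) {a b : α} (hab : G.Adj u v → a ≠ b)
    (h : ∀ c, ∃ f : (G.induce (G.lobe u v {c})).Coloring α,
      f ⟨u, left_mem_lobe⟩ = f ⟨v, right_mem_lobe⟩ ↔ a = b) :
    Nonempty (G.Coloring α) := by
  choose f hf using fun c => (h c).choose.exists_apply_eq_and_apply_eq (h c).choose_spec
  exact nonempty_coloring_of_lobes huv hab f (fun c => (hf c).1) fun c => (hf c).2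

end Gluing

section Critical

variable {α : Type*} {a b : α} (huv : u ≠ v) (hab : a ≠ b) (hG : IsEmpty (G.Coloring α))
  (hcol : ∀ A : Set V, A ≠ univ → Nonempty ((G.induce A).Coloring α))
  (hdisc : ¬ (G.induce ({u, v}ᶜ : Set V)).Connected)

include hcol hdisc in
theorem nonempty_coloring_lobe_singleton (c) :
    Nonempty ((G.induce (G.lobe u v {c})).Coloring α) := by
  obtain ⟨c', hc'⟩ := c.exists_ne_of_not_connected hdisc
  exact hcol _ (lobe_ne_univ hc')

include huv hab hG hcol hdisc in
theorem not_adj_of_isEmpty_coloring : ¬ G.Adj u v := by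
  intro huv'
  refine hG.false (nonempty_coloring_of_forall_lobe huv (fun _ => hab) fun c => ?_).some
  obtain ⟨f⟩ := nonempty_coloring_lobe_singleton hcol hdisc c
  exact ⟨f, iff_of_false (f.valid huv') hab⟩

include huv hab hG in
theorem exists_lobe_forall_coloring_eq :
    ∃ c, ∀ f : (G.induce (G.lobe u v {c})).Coloring α,
      f ⟨u, left_mem_lobe⟩ = f ⟨v, right_mem_lobe⟩ := by
  by_contra! h
  refine hG.false (nonempty_coloring_of_forall_lobe huv (fun _ => hab) fun c => ?_).some
  obtain ⟨f, hf⟩ := h c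
  exact ⟨f, iff_of_false hf hab⟩

include huv hab hG hcol hdisc in
theorem exists_lobe_forall_coloring_ne :
    ∃ c, ∀ f : (G.induce (G.lobe u v {c})).Coloring α,
      f ⟨u, left_mem_lobe⟩ ≠ f ⟨v, right_mem_lobe⟩ := by
  by_contra! h
  have hnadj := not_adj_of_isEmpty_coloring huv hab hG hcol hdisc
  refine hG.false
    (nonempty_coloring_of_forall_lobe huv (a := a) (b := a) (absurd · hnadj) fun c => ?_).some
  obtain ⟨f, hf⟩ := h c
  exact ⟨f, iff_of_true hf rfl⟩

include huv hab hG hcol hdisc in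
theorem card_connectedComponent_induce_eq_two :
    Nat.card (G.induce ({u, v}ᶜ : Set V)).ConnectedComponent = 2 := by
  obtain ⟨c₀, h₀⟩ := exists_lobe_forall_coloring_eq huv hab hG
  obtain ⟨c₁, h₁⟩ := exists_lobe_forall_coloring_ne huv hab hG hcol hdisc
  have hne : c₀ ≠ c₁ := by
    rintro rfl
    obtain ⟨f⟩ := nonempty_coloring_lobe_singleton hcol hdisc c₀
    exact h₁ f (h₀ f)
  refine Nat.card_eq_two_iff.mpr ⟨c₀, c₁, hne, eq_univ_of_forall fun c => ?_⟩
  by_contra! hc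
  simp only [mem_insert_iff, mem_singleton_iff, not_or] at hc
  obtain ⟨F⟩ := hcol _ (lobe_ne_univ (Γ := {c}ᶜ) (notMem_compl_iff.mpr rfl))
  have hsub (c' : _) (hc' : c' ≠ c) : G.lobe u v {c'} ⊆ G.lobe u v {c}ᶜ :=
    lobe_mono (singleton_subset_iff.mpr hc')
  exact h₁ (F.comp (G.induceHomOfLE (hsub c₁ (Ne.symm hc.2))).toHom)
    (h₀ (F.comp (G.induceHomOfLE (hsub c₀ (Ne.symm hc.1))).toHom))

end Critical

end SimpleGraph

theorem IsCritical.colorable_induce {V : Type*} {k : ℕ} {G : SimpleGraph V} (hG : IsCritical k G)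
    {A : Set V} (hA : A ≠ univ) : (G.induce A).Colorable (k - 1) := by
  rw [induce_eq_coe_induce_top]
  exact hG.2 _ fun h => hA (by simpa using congrArg Subgraph.verts h)

theorem stmt9_general (k : ℕ) (hk : 4 ≤ k)
    (V : Type) (G : SimpleGraph V) (hG : IsCritical k G)
    (u v : V) (huv : u ≠ v)
    (hdisc : ¬ (G.induce ({u, v}ᶜ : Set V)).Connected) :
    ¬ G.Adj u v ∧
      Nat.card (G.induce ({u, v}ᶜ : Set V)).ConnectedComponent = 2 := by
  have hncol : IsEmpty (G.Coloring (Fin (k - 1))) := not_nonempty_iff.mp hG.1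
  have hcol (A : Set V) (hA : A ≠ univ) := hG.colorable_induce hA
  have h01 : (⟨0, by omega⟩ : Fin (k - 1)) ≠ ⟨1, by omega⟩ := by simp
  exact ⟨not_adj_of_isEmpty_coloring huv h01 hncol hcol hdisc,
    card_connectedComponent_induce_eq_two huv h01 hncol hcol hdisc⟩

theorem stmt9 (k : ℕ) (hk : 4 ≤ k)
    (V : Type) [Fintype V] (G : SimpleGraph V) (hG : IsCritical k G)
    (u v : V) (huv : u ≠ v)
    (hdisc : ¬ (G.induce ({u, v}ᶜ : Set V)).Connected) :
    ¬ G.Adj u v ∧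
      Nat.card (G.induce ({u, v}ᶜ : Set V)).ConnectedComponent = 2 :=
  stmt9_general k hk V G hG u v huv hdisc
end

section
/- Let k ≥ 4 be an integer, let G be a k-critical graph, and let u, v be distinct vertices of G such that G∖{u,v} is disconnected. Then there exist proper induced subgraphs G₁ and G₂ of G such that G = G₁ ∪ G₂, V(G₁) ∩ V(G₂) = {u,v}, the graphs G₁∖{u,v} and G₂∖{u,v} are the two connected components of G∖{u,v}, u and v have no common neighbor in G₂, the graph G₁ + uv obtained from G₁ by adding the edge uv is k-critical, and the graph obtained from G₂ by identifying the vertices u and v (a simple graph, since u and v are nonadjacent and have no common neighbor in G₂) is k-critical. -/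
open SimpleGraph

/-- The graph obtained from `G` by adding the edge `xy`. -/
def addEdge {V : Type*} (G : SimpleGraph V) (x y : V) : SimpleGraph V :=
  G ⊔ SimpleGraph.fromEdgeSet {s(x, y)}

/-- The graph obtained from `G` by identifying the vertices `u` and `v`
(the merged vertex is represented by `u`, and `v` is removed). -/
def identify {V : Type*} (G : SimpleGraph V) (u v : V) :
    SimpleGraph {x : V // x ≠ v} where
  Adj a b := (a : V) ≠ (b : V) ∧
    (G.Adj a b ∨ ((a : V) = u ∧ G.Adj v b) ∨ ((b : V) = u ∧ G.Adj (a : V) v))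
  symm := by
    constructor; rintro a b ⟨hne, h | ⟨ha, h⟩ | ⟨hb, h⟩⟩
    · exact ⟨hne.symm, Or.inl h.symm⟩
    · exact ⟨hne.symm, Or.inr (Or.inr ⟨ha, h.symm⟩)⟩
    · exact ⟨hne.symm, Or.inr (Or.inl ⟨hb, h.symm⟩)⟩
  loopless := by constructor; rintro a ⟨hne, -⟩; exact hne rfl

/-!
If `K` is a union of components of `G - {u, v}`, a proper `(k-1)`-colouring of `G - K` and one
of `G[K ∪ {u, v}]` glue, after permuting colours, to a colouring of `G` as soon as both give `u`
and `v` equal colours or both give them distinct colours. As `G` is not `(k-1)`-colourable,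
every colouring of `G[K ∪ {u, v}]` has the pattern opposite to that of a fixed colouring of
`G - K`, and criticality provides the latter. Two disjoint such `K` therefore force opposite
patterns, so `G - {u, v}` has exactly two components: on `G₁` every colouring gives `u, v` the
same colour, so `G₁ + uv` is not colourable, and on `G₂` every colouring separates them, so
`G₂ / uv` is not colourable. Deleting a vertex or an edge of either graph makes it colourable by
restricting a colouring of `G` minus a vertex or an edge, whose pattern on `u, v` is again
forced by the other side.
-/

section

variable {V : Type*} {α : Type*}

section Coloring

variable {G : SimpleGraph V} {u v : V}

-- Colourings are total functions on `V`, so that colourings of overlapping vertex sets can be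
-- compared and glued.
def ProperOn (G : SimpleGraph V) (S : Set V) (c : V → α) : Prop :=
  ∀ ⦃a⦄, a ∈ S → ∀ ⦃b⦄, b ∈ S → G.Adj a b → c a ≠ c b

def ForcesSameColor (G : SimpleGraph V) (α : Type*) (S : Set V) (u v : V) : Prop :=
  ∀ c : V → α, ProperOn G S c → c u = c v

def ForcesDistinctColors (G : SimpleGraph V) (α : Type*) (S : Set V) (u v : V) : Prop :=
  ∀ c : V → α, ProperOn G S c → c u ≠ c v

theorem ProperOn.mono {S T : Set V} {c : V → α} (h : ProperOn G T c) (hST : S ⊆ T) :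
    ProperOn G S c :=
  fun _ ha _ hb => h (hST ha) (hST hb)

theorem exists_properOn_extend [Nonempty α] {S : Set V} (f : S → α)
    (hf : ∀ a b : S, G.Adj a b → f a ≠ f b) :
    ∃ c : V → α, ProperOn G S c ∧ ∀ a : S, c a = f a := by
  classical
  have hext := Subtype.val_injective.extend_apply f (fun _ : V => Classical.arbitrary α)
  exact ⟨_, fun a ha b hb hab => by rw [hext ⟨a, ha⟩, hext ⟨b, hb⟩]; exact hf _ _ hab, hext⟩

theorem SimpleGraph.Coloring.properOn_deleteEdges {x y : V}
    (c : (G.deleteEdges {s(x, y)}).Coloring α) {S : Set V} (h : ¬ (x ∈ S ∧ y ∈ S)) :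
    ProperOn G S c := by
  refine fun a ha b hb hab => c.valid (deleteEdges_adj.2 ⟨hab, fun he => h ?_⟩)
  rcases Sym2.eq_iff.1 he with ⟨rfl, rfl⟩ | ⟨rfl, rfl⟩
  exacts [⟨ha, hb⟩, ⟨hb, ha⟩]

theorem SimpleGraph.not_adj_of_mem_pair (hnadj : ¬ G.Adj u v) {x y : V}
    (hx : x ∈ ({u, v} : Set V)) (hy : y ∈ ({u, v} : Set V)) : ¬ G.Adj x y := by
  rcases hx with rfl | rfl <;> rcases hy with rfl | rfl
  exacts [G.irrefl, hnadj, fun h => hnadj h.symm, G.irrefl]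

theorem ne_of_sym2_eq {W : Type*} {f : W → α} {a b x y : W} (h : s(a, b) = s(x, y))
    (hf : f x ≠ f y) : f a ≠ f b := by
  rcases Sym2.eq_iff.1 h with ⟨rfl, rfl⟩ | ⟨rfl, rfl⟩
  exacts [hf, hf.symm]

theorem Equiv.Perm.exists_apply_eq_apply [DecidableEq α] {a b a' b' : α} (h : a = b ↔ a' = b') :
    ∃ σ : Equiv.Perm α, σ a = a' ∧ σ b = b' := by
  by_cases hab : a = b
  · subst hab
    exact ⟨Equiv.swap a a', Equiv.swap_apply_left _ _, (Equiv.swap_apply_left _ _).trans (h.1 rfl)⟩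
  set τ := Equiv.swap a a'
  have hτb : τ b ≠ a' := fun he =>
    hab (τ.injective (he.trans (Equiv.swap_apply_left a a').symm)).symm
  refine ⟨τ.trans (Equiv.swap (τ b) b'), ?_, Equiv.swap_apply_left _ _⟩
  simp only [Equiv.trans_apply, τ, Equiv.swap_apply_left]
  exact Equiv.swap_apply_of_ne_of_ne hτb.symm (mt h.2 hab)

end Coloring

section Critical

variable {G : SimpleGraph V} {u v : V} {k : ℕ} {A : Set V}

theorem IsCritical.exists_properOn (hG : IsCritical k G) (hk : 2 ≤ k) {S : Set V}
    (hS : S ≠ Set.univ) : ∃ c : V → Fin (k - 1), ProperOn G S c := by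
  have htop : (⊤ : G.Subgraph).induce S ≠ ⊤ := fun h =>
    hS (by simpa using congrArg Subgraph.verts h)
  obtain ⟨d⟩ := hG.2 _ htop
  have : Nonempty (Fin (k - 1)) := ⟨⟨0, by omega⟩⟩
  obtain ⟨c, hc, -⟩ := exists_properOn_extend (G := G) d fun a b hab => d.valid ⟨a.2, b.2, hab⟩
  exact ⟨c, hc⟩

theorem IsCritical.colorable_deleteEdges (hG : IsCritical k G) {x y : V} (hxy : G.Adj x y) :
    (G.deleteEdges {s(x, y)}).Colorable (k - 1) := by
  have htop : (⊤ : G.Subgraph).deleteEdges {s(x, y)} ≠ ⊤ := fun h => by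
    simpa [hxy] using congrArg (fun H : G.Subgraph => H.Adj x y) h
  refine (hG.2 _ htop).of_hom ⟨fun a => ⟨a, trivial⟩, fun {a b} hab => ?_⟩
  show ((⊤ : G.Subgraph).deleteEdges _).Adj a b
  simpa using hab

theorem isCritical_of_colorable_induce_deleteEdges (hG : ¬ G.Colorable (k - 1))
    (hvert : ∀ w, (G.induce {w}ᶜ).Colorable (k - 1))
    (hedge : ∀ x y, G.Adj x y → (G.deleteEdges {s(x, y)}).Colorable (k - 1)) :
    IsCritical k G := by
  refine ⟨hG, fun H hH => ?_⟩
  by_cases hverts : ∀ w, w ∈ H.verts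
  · obtain ⟨x, y, hxy, hHxy⟩ : ∃ x y, G.Adj x y ∧ ¬ H.Adj x y := by
      by_contra! hadj
      exact hH (Subgraph.ext (Set.eq_univ_of_forall hverts)
        (funext₂ fun x y => propext ⟨fun h => H.adj_sub h, hadj x y⟩))
    refine (hedge x y hxy).of_hom
      ⟨fun a => a.1, fun {a b} hab => deleteEdges_adj.2 ⟨H.adj_sub hab, ?_⟩⟩
    rintro he
    rcases Sym2.eq_iff.1 he with ⟨ha, hb⟩ | ⟨ha, hb⟩
    · exact hHxy (ha ▸ hb ▸ hab)
    · exact hHxy (ha ▸ hb ▸ hab.symm)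
  · obtain ⟨w, hw⟩ := not_forall.1 hverts
    exact (hvert w).of_hom
      ⟨fun a => (⟨a.1, fun h => hw (h ▸ a.2)⟩ : ({w}ᶜ : Set V)), fun hab => H.adj_sub hab⟩

theorem IsCritical.notMem_commonNeighbors (hG : IsCritical k G) (huv : u ≠ v)
    (hsame : ForcesSameColor G (Fin (k - 1)) A u v) {w : V} (hw : w ∉ A) :
    w ∉ G.commonNeighbors u v := by
  rintro ⟨huw, hvw⟩
  obtain ⟨c⟩ := hG.colorable_deleteEdges huw
  have hcuv : c u = c v := hsame c (c.properOn_deleteEdges fun h => hw h.2)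
  refine hG.1 ⟨Coloring.mk c fun {a b} hab => ?_⟩
  by_cases he : s(a, b) = s(u, w)
  · refine ne_of_sym2_eq he ?_
    rw [hcuv]
    refine c.valid (deleteEdges_adj.2 ⟨hvw, fun he' => huv ?_⟩)
    rcases Sym2.eq_iff.1 he' with ⟨h, -⟩ | ⟨h₁, h₂⟩
    exacts [h.symm, (h₁.trans h₂).symm]
  · exact c.valid (deleteEdges_adj.2 ⟨hab, he⟩)

end Critical

section Flap

variable {G : SimpleGraph V} {u v : V} {K K₁ K₂ : Set V}

/-- `K` is a union of connected components of `G - {u, v}`. -/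
structure IsFlap (G : SimpleGraph V) (u v : V) (K : Set V) : Prop where
  left_notMem : u ∉ K
  right_notMem : v ∉ K
  mem_of_adj : ∀ ⦃a b⦄, a ∈ K → G.Adj a b → b ∈ K ∪ {u, v}

theorem IsFlap.union_pair_diff (hK : IsFlap G u v K) : (K ∪ {u, v}) \ {u, v} = K := by
  have := hK.left_notMem; have := hK.right_notMem
  ext z; constructor
  · rintro ⟨hz | hz, hz'⟩
    exacts [hz, absurd hz hz']
  · rintro hz
    exact ⟨Or.inl hz, by rintro (rfl | rfl) <;> contradiction⟩

theorem IsFlap.union_pair_subset_compl (hK₁ : IsFlap G u v K₁) (hd : Disjoint K₁ K₂) :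
    K₂ ∪ {u, v} ⊆ K₁ᶜ := by
  rintro z (hz | rfl | rfl)
  exacts [hd.notMem_of_mem_right hz, hK₁.left_notMem, hK₁.right_notMem]

theorem IsFlap.union_pair_ne_univ (hK₂ : IsFlap G u v K₂) (hd : Disjoint K₁ K₂)
    (hne : K₂.Nonempty) : K₁ ∪ {u, v} ≠ Set.univ := by
  obtain ⟨z, hz⟩ := hne
  refine fun h => (hK₂.union_pair_subset_compl hd.symm) (h ▸ Set.mem_univ z) hz

theorem IsFlap.not_adj_of_disjoint (hK₁ : IsFlap G u v K₁) (hK₂ : IsFlap G u v K₂)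
    (hd : Disjoint K₁ K₂) {a b : V} (ha : a ∈ K₁) (hb : b ∈ K₂) : ¬ G.Adj a b :=
  fun hab => hK₂.union_pair_subset_compl hd.symm (hK₁.mem_of_adj ha hab) hb

theorem IsFlap.colorable_of_glue [DecidableEq α] (hK : IsFlap G u v K) {c d : V → α}
    (hc : ProperOn G Kᶜ c) (hd : ProperOn G (K ∪ {u, v}) d) (hcd : c u = c v ↔ d u = d v) :
    Nonempty (G.Coloring α) := by
  classical
  obtain ⟨σ, hσu, hσv⟩ := Equiv.Perm.exists_apply_eq_apply hcd.symm
  let e : V → α := fun z => if z ∈ K then σ (d z) else c z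
  have he_d : ∀ z ∈ K ∪ {u, v}, e z = σ (d z) := by
    rintro z (hz | rfl | rfl)
    · exact if_pos hz
    · exact (if_neg hK.left_notMem).trans hσu.symm
    · exact (if_neg hK.right_notMem).trans hσv.symm
  have he_c : ∀ z ∈ Kᶜ, e z = c z := fun z hz => if_neg hz
  refine ⟨Coloring.mk e fun {a b} hab => ?_⟩
  by_cases hab' : a ∈ K ∨ b ∈ K
  · have hmem : a ∈ K ∪ {u, v} ∧ b ∈ K ∪ {u, v} := by
      rcases hab' with ha | hb
      exacts [⟨Or.inl ha, hK.mem_of_adj ha hab⟩, ⟨hK.mem_of_adj hb hab.symm, Or.inl hb⟩]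
    rw [he_d a hmem.1, he_d b hmem.2]
    exact σ.injective.ne (hd hmem.1 hmem.2 hab)
  · push Not at hab'
    rw [he_c a hab'.1, he_c b hab'.2]
    exact hc hab'.1 hab'.2 hab

theorem IsFlap.eq_iff_ne [DecidableEq α] (hG : ¬ Nonempty (G.Coloring α)) (hK : IsFlap G u v K)
    {c d : V → α} (hc : ProperOn G Kᶜ c) (hd : ProperOn G (K ∪ {u, v}) d) :
    d u = d v ↔ c u ≠ c v := by
  have := fun hcd => hG (hK.colorable_of_glue hc hd hcd)
  tauto

theorem IsFlap.eq_iff_ne_of_disjoint [DecidableEq α] (hG : ¬ Nonempty (G.Coloring α))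
    (hK₁ : IsFlap G u v K₁) (hK₂ : IsFlap G u v K₂) (hd : Disjoint K₁ K₂) {c₁ c₂ : V → α}
    (hc₁ : ProperOn G K₁ᶜ c₁) (hc₂ : ProperOn G K₂ᶜ c₂) : c₁ u = c₁ v ↔ c₂ u ≠ c₂ v :=
  hK₂.eq_iff_ne hG hc₂ (hc₁.mono (hK₁.union_pair_subset_compl hd))

theorem IsFlap.forces_of_eq [DecidableEq α] (hG : ¬ Nonempty (G.Coloring α))
    (hK₁ : IsFlap G u v K₁) (hK₂ : IsFlap G u v K₂) (hd : Disjoint K₁ K₂) {c₁ c₂ : V → α}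
    (hc₁ : ProperOn G K₁ᶜ c₁) (hc₂ : ProperOn G K₂ᶜ c₂) (h : c₂ u = c₂ v) :
    ForcesSameColor G α (K₁ ∪ {u, v}) u v ∧ ForcesDistinctColors G α (K₂ ∪ {u, v}) u v := by
  have h₁ : c₁ u ≠ c₁ v := fun h' => (hK₁.eq_iff_ne_of_disjoint hG hK₂ hd hc₁ hc₂).1 h' h
  exact ⟨fun d hd₁ => (hK₁.eq_iff_ne hG hc₁ hd₁).2 h₁,
    fun d hd₂ h' => (hK₂.eq_iff_ne hG hc₂ hd₂).1 h' h⟩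

variable {k : ℕ}

theorem IsFlap.forces_or (hG : IsCritical k G) (hk : 2 ≤ k) (hK₁ : IsFlap G u v K₁)
    (hK₂ : IsFlap G u v K₂) (hd : Disjoint K₁ K₂) (hne₁ : K₁.Nonempty) (hne₂ : K₂.Nonempty) :
    (ForcesSameColor G (Fin (k - 1)) (K₁ ∪ {u, v}) u v ∧
      ForcesDistinctColors G (Fin (k - 1)) (K₂ ∪ {u, v}) u v) ∨
    (ForcesSameColor G (Fin (k - 1)) (K₂ ∪ {u, v}) u v ∧
      ForcesDistinctColors G (Fin (k - 1)) (K₁ ∪ {u, v}) u v) := by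
  obtain ⟨c₁, hc₁⟩ := hG.exists_properOn hk (Set.compl_ne_univ.2 hne₁)
  obtain ⟨c₂, hc₂⟩ := hG.exists_properOn hk (Set.compl_ne_univ.2 hne₂)
  by_cases h : c₂ u = c₂ v
  · exact Or.inl (hK₁.forces_of_eq hG.1 hK₂ hd hc₁ hc₂ h)
  · exact Or.inr (hK₂.forces_of_eq hG.1 hK₁ hd.symm hc₂ hc₁
      ((hK₁.eq_iff_ne_of_disjoint hG.1 hK₂ hd hc₁ hc₂).2 h))

theorem not_three_disjoint_flaps (hG : IsCritical k G) (hk : 2 ≤ k) {K₃ : Set V}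
    (hK₁ : IsFlap G u v K₁) (hK₂ : IsFlap G u v K₂) (hK₃ : IsFlap G u v K₃)
    (h₁₂ : Disjoint K₁ K₂) (h₁₃ : Disjoint K₁ K₃) (h₂₃ : Disjoint K₂ K₃)
    (hne₁ : K₁.Nonempty) (hne₂ : K₂.Nonempty) (hne₃ : K₃.Nonempty) : False := by
  obtain ⟨c₁, hc₁⟩ := hG.exists_properOn hk (Set.compl_ne_univ.2 hne₁)
  obtain ⟨c₂, hc₂⟩ := hG.exists_properOn hk (Set.compl_ne_univ.2 hne₂)
  obtain ⟨c₃, hc₃⟩ := hG.exists_properOn hk (Set.compl_ne_univ.2 hne₃)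
  have := hK₁.eq_iff_ne_of_disjoint hG.1 hK₂ h₁₂ hc₁ hc₂
  have := hK₁.eq_iff_ne_of_disjoint hG.1 hK₃ h₁₃ hc₁ hc₃
  have := hK₂.eq_iff_ne_of_disjoint hG.1 hK₃ h₂₃ hc₂ hc₃
  tauto

end Flap

section Components

variable {G : SimpleGraph V} {u v : V} {k : ℕ}

theorem SimpleGraph.ConnectedComponent.connected_induce_image_supp {C : Set V}
    (X : (G.induce C).ConnectedComponent) : (G.induce (Subtype.val '' X.supp)).Connected :=
  X.connected_toSimpleGraph.map ⟨fun a => ⟨a.1.1, a.1, a.2, rfl⟩, fun hab => hab⟩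
    (by rintro ⟨_, a, ha, rfl⟩; exact ⟨⟨a, ha⟩, rfl⟩)

theorem SimpleGraph.ConnectedComponent.disjoint_image_supp {C : Set V}
    {X Y : (G.induce C).ConnectedComponent} (h : X ≠ Y) :
    Disjoint (Subtype.val '' X.supp) (Subtype.val '' Y.supp) :=
  (Set.disjoint_image_iff Subtype.val_injective).2 (pairwise_disjoint_supp_connectedComponent _ h)

theorem SimpleGraph.ConnectedComponent.isFlap_image_supp
    (X : (G.induce ({u, v}ᶜ : Set V)).ConnectedComponent) :
    IsFlap G u v (Subtype.val '' X.supp) where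
  left_notMem := by rintro ⟨a, -, ha⟩; exact a.2 (by simp [ha])
  right_notMem := by rintro ⟨a, -, ha⟩; exact a.2 (by simp [ha])
  mem_of_adj := by
    rintro _ b ⟨a, ha, rfl⟩ hab
    by_cases hb : b ∈ ({u, v} : Set V)
    · exact Or.inr hb
    · exact Or.inl ⟨⟨b, hb⟩, X.mem_supp_of_adj_mem_supp ha hab, rfl⟩

theorem IsCritical.compl_pair_nonempty (hG : IsCritical k G) (hk : 3 ≤ k) (u v : V) :
    ({u, v}ᶜ : Set V).Nonempty := by
  classical
  by_contra h
  have hmem : ∀ z, z = u ∨ z = v := fun z => by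
    by_contra hz
    exact h ⟨z, by simpa using hz⟩
  refine hG.1 (Colorable.mono (n := 2) (by omega)
    ⟨Coloring.mk (fun z => if z = u then 0 else 1) fun {a b} hab => ?_⟩)
  rcases hmem a with rfl | rfl <;> rcases hmem b with rfl | rfl <;>
    simp [hab.ne, hab.ne.symm] at hab ⊢

theorem IsCritical.exists_flaps (hG : IsCritical k G) (hk : 3 ≤ k)
    (hdisc : ¬ (G.induce ({u, v}ᶜ : Set V)).Connected) :
    ∃ K₁ K₂ : Set V, IsFlap G u v K₁ ∧ IsFlap G u v K₂ ∧ Disjoint K₁ K₂ ∧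
      K₁ ∪ K₂ = {u, v}ᶜ ∧ (G.induce K₁).Connected ∧ (G.induce K₂).Connected ∧
      ForcesSameColor G (Fin (k - 1)) (K₁ ∪ {u, v}) u v ∧
      ForcesDistinctColors G (Fin (k - 1)) (K₂ ∪ {u, v}) u v := by
  have : Nonempty ({u, v}ᶜ : Set V) := (hG.compl_pair_nonempty hk u v).to_subtype
  have hpre : ¬ (G.induce ({u, v}ᶜ : Set V)).Preconnected := fun h =>
    hdisc ((connected_iff _).2 ⟨h, this⟩)
  simp only [Preconnected, not_forall] at hpre
  obtain ⟨a, b, hab⟩ := hpre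
  set X := (G.induce ({u, v}ᶜ : Set V)).connectedComponentMk a
  set Y := (G.induce ({u, v}ᶜ : Set V)).connectedComponentMk b
  have hXY : X ≠ Y := mt ConnectedComponent.eq.1 hab
  have hcover : ∀ Z, Z = X ∨ Z = Y := by
    by_contra! h
    obtain ⟨Z, hZX, hZY⟩ := h
    exact not_three_disjoint_flaps hG (by omega) X.isFlap_image_supp Y.isFlap_image_supp
      Z.isFlap_image_supp (ConnectedComponent.disjoint_image_supp hXY)
      (ConnectedComponent.disjoint_image_supp hZX.symm)
      (ConnectedComponent.disjoint_image_supp hZY.symm)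
      (X.nonempty_supp.image _) (Y.nonempty_supp.image _) (Z.nonempty_supp.image _)
  have hunion : Subtype.val '' X.supp ∪ Subtype.val '' Y.supp = {u, v}ᶜ := by
    ext z
    refine ⟨by rintro (⟨z, -, rfl⟩ | ⟨z, -, rfl⟩) <;> exact z.2, fun hz => ?_⟩
    rcases hcover ((G.induce _).connectedComponentMk ⟨z, hz⟩) with h | h
    exacts [Or.inl ⟨⟨z, hz⟩, h, rfl⟩, Or.inr ⟨⟨z, hz⟩, h, rfl⟩]
  rcases X.isFlap_image_supp.forces_or hG (by omega) Y.isFlap_image_supp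
    (ConnectedComponent.disjoint_image_supp hXY) (X.nonempty_supp.image _)
    (Y.nonempty_supp.image _) with ⟨h₁, h₂⟩ | ⟨h₁, h₂⟩
  · exact ⟨_, _, X.isFlap_image_supp, Y.isFlap_image_supp,
      ConnectedComponent.disjoint_image_supp hXY, hunion, X.connected_induce_image_supp,
      Y.connected_induce_image_supp, h₁, h₂⟩
  · exact ⟨_, _, Y.isFlap_image_supp, X.isFlap_image_supp,
      ConnectedComponent.disjoint_image_supp hXY.symm, Set.union_comm _ _ ▸ hunion,
      Y.connected_induce_image_supp, X.connected_induce_image_supp, h₁, h₂⟩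

end Components

section AddEdge

variable {G : SimpleGraph V} {u v : V} {k : ℕ} {A B : Set V}

theorem addEdge_adj {W : Type*} {H : SimpleGraph W} {x y a b : W} :
    (addEdge H x y).Adj a b ↔ H.Adj a b ∨ (s(a, b) = s(x, y) ∧ a ≠ b) := by
  simp [addEdge]

theorem IsCritical.isCritical_addEdge (hG : IsCritical k G) (hk : 2 ≤ k) (huv : u ≠ v)
    (hnadj : ¬ G.Adj u v) (hAB : A ∩ B = {u, v}) (hA : A ≠ Set.univ)
    (hsame : ForcesSameColor G (Fin (k - 1)) A u v)
    (hdist : ForcesDistinctColors G (Fin (k - 1)) B u v) (hu : u ∈ A) (hv : v ∈ A) :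
    IsCritical k (addEdge (G.induce A) ⟨u, hu⟩ ⟨v, hv⟩) := by
  refine isCritical_of_colorable_induce_deleteEdges ?_ (fun w => ?_) (fun x y hxy => ?_)
  · rintro ⟨col⟩
    have : Nonempty (Fin (k - 1)) := ⟨col ⟨u, hu⟩⟩
    obtain ⟨c, hc, hcol⟩ := exists_properOn_extend (G := G) (fun a => col a)
      fun a b hab => col.valid (addEdge_adj.2 (Or.inl hab))
    refine col.valid (addEdge_adj.2 (Or.inr ⟨rfl, fun h => huv (congrArg Subtype.val h)⟩)) ?_
    rw [← hcol, ← hcol]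
    exact hsame c hc
  · obtain ⟨c, hc⟩ := hG.exists_properOn hk (S := {w.1}ᶜ) (by simp)
    refine ⟨Coloring.mk (fun a => c a.1.1) fun {a b} hab => ?_⟩
    rcases addEdge_adj.1 hab with h | ⟨h, -⟩
    · exact hc (fun h' => a.2 (Subtype.ext h')) (fun h' => b.2 (Subtype.ext h')) h
    · have hw : ∀ z ∈ s((⟨u, hu⟩ : A), ⟨v, hv⟩), z ≠ w := fun z hz => by
        rw [← h, Sym2.mem_iff] at hz
        rcases hz with rfl | rfl
        exacts [a.2, b.2]
      have hwB : w.1 ∉ B := fun hwB => by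
        rcases (hAB ▸ ⟨w.2, hwB⟩ : w.1 ∈ ({u, v} : Set V)) with hwu | hwv
        · exact hw _ (Sym2.mem_mk_left _ _) (Subtype.ext hwu.symm)
        · exact hw _ (Sym2.mem_mk_right _ _) (Subtype.ext hwv.symm)
      exact ne_of_sym2_eq (f := fun a : A => c a) h
        (hdist c (hc.mono fun z hz hzw => hwB (hzw ▸ hz)))
  · by_cases hxy' : G.Adj x y
    · obtain ⟨c⟩ := hG.colorable_deleteEdges hxy'
      have hcuv : c u ≠ c v := hdist c (c.properOn_deleteEdges fun h =>
        not_adj_of_mem_pair hnadj (hAB ▸ ⟨x.2, h.1⟩) (hAB ▸ ⟨y.2, h.2⟩) hxy')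
      refine ⟨Coloring.mk (fun a => c a.1) fun {a b} hab => ?_⟩
      obtain ⟨hab, hne⟩ := deleteEdges_adj.1 hab
      rcases addEdge_adj.1 hab with h | ⟨h, -⟩
      · exact c.valid (deleteEdges_adj.2 ⟨h, by simpa [Subtype.ext_iff] using hne⟩)
      · exact ne_of_sym2_eq (f := fun a : A => c a) h hcuv
    · obtain ⟨c, hc⟩ := hG.exists_properOn hk hA
      have hxy_uv := ((addEdge_adj.1 hxy).resolve_left hxy').1
      refine ⟨Coloring.mk (fun a => c a.1) fun {a b} hab => ?_⟩
      obtain ⟨hab, hne⟩ := deleteEdges_adj.1 hab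
      rcases addEdge_adj.1 hab with h | ⟨h, -⟩
      · exact hc a.2 b.2 h
      · exact absurd (h.trans hxy_uv.symm) hne

end AddEdge

section IdentifyMap

variable {W : Type*} {H : SimpleGraph W} {x y : W}

open Classical in
noncomputable def identifyMap (hxy : x ≠ y) (p : W) : {z : W // z ≠ y} :=
  if h : p = y then ⟨x, hxy⟩ else ⟨p, h⟩

theorem identifyMap_of_ne (hxy : x ≠ y) {p : W} (hp : p ≠ y) : identifyMap hxy p = ⟨p, hp⟩ :=
  dif_neg hp

theorem identifyMap_right (hxy : x ≠ y) : identifyMap hxy y = ⟨x, hxy⟩ :=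
  dif_pos rfl

theorem identifyMap_left (hxy : x ≠ y) : identifyMap hxy x = identifyMap hxy y := by
  rw [identifyMap_of_ne hxy hxy, identifyMap_right]

theorem apply_identifyMap (hxy : x ≠ y) {f : W → α} (hf : f x = f y) (p : W) :
    f (identifyMap hxy p) = f p := by
  by_cases hp : p = y
  · subst hp; rw [identifyMap_right, hf]
  · rw [identifyMap_of_ne hxy hp]

theorem identify_adj_iff (hxy : x ≠ y) {a b : {z : W // z ≠ y}} :
    (identify H x y).Adj a b ↔
      a ≠ b ∧ ∃ p q, H.Adj p q ∧ identifyMap hxy p = a ∧ identifyMap hxy q = b := by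
  constructor
  · rintro ⟨hne, h | ⟨ha, h⟩ | ⟨hb, h⟩⟩
    · exact ⟨Subtype.coe_ne_coe.1 hne, a, b, h, identifyMap_of_ne _ a.2, identifyMap_of_ne _ b.2⟩
    · exact ⟨Subtype.coe_ne_coe.1 hne, y, b, h,
        (identifyMap_right _).trans (Subtype.ext ha.symm), identifyMap_of_ne _ b.2⟩
    · exact ⟨Subtype.coe_ne_coe.1 hne, a, y, h, identifyMap_of_ne _ a.2,
        (identifyMap_right _).trans (Subtype.ext hb.symm)⟩
  · rintro ⟨hne, p, q, hpq, rfl, rfl⟩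
    refine ⟨Subtype.coe_ne_coe.2 hne, ?_⟩
    by_cases hp : p = y <;> by_cases hq : q = y
    · exact absurd (hp ▸ hq ▸ hpq) H.irrefl
    · subst hp; simp [identifyMap_right, identifyMap_of_ne _ hq, hpq]
    · subst hq; simp [identifyMap_right, identifyMap_of_ne _ hp, hpq]
    · simp [identifyMap_of_ne _ hp, identifyMap_of_ne _ hq, hpq]

theorem identifyMap_ne_of_adj (hxy : x ≠ y) (hnadj : ¬ H.Adj x y) {p q : W} (hpq : H.Adj p q) :
    identifyMap hxy p ≠ identifyMap hxy q := by
  by_cases hp : p = y <;> by_cases hq : q = y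
  · exact absurd (hp ▸ hq ▸ hpq) H.irrefl
  · subst hp
    rw [identifyMap_right, identifyMap_of_ne _ hq, Ne, Subtype.mk.injEq]
    rintro rfl; exact hnadj hpq.symm
  · subst hq
    rw [identifyMap_right, identifyMap_of_ne _ hp, Ne, Subtype.mk.injEq]
    rintro rfl; exact hnadj hpq
  · rw [identifyMap_of_ne _ hp, identifyMap_of_ne _ hq, Ne, Subtype.mk.injEq]
    exact hpq.ne

end IdentifyMap

section Identify

variable {G : SimpleGraph V} {u v : V} {k : ℕ} {A B : Set V}

theorem IsCritical.exists_properOn_compl_eq (hG : IsCritical k G) (hk : 2 ≤ k) (huv : u ≠ v)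
    (hAB : A ∩ B = {u, v}) (hsame : ForcesSameColor G (Fin (k - 1)) A u v) {w : V}
    (hwB : w ∈ B) (hwv : w ≠ v) : ∃ c : V → Fin (k - 1), ProperOn G {w}ᶜ c ∧ c u = c v := by
  classical
  obtain ⟨c, hc⟩ := hG.exists_properOn hk (S := {w}ᶜ) (by simp)
  by_cases hwu : w = u
  · -- `u` is not coloured by `c`, so it may take the colour of `v`.
    refine ⟨Function.update c u (c v), fun a ha b hb hab => ?_, by simp [huv.symm]⟩
    rw [Function.update_of_ne (hwu ▸ ha), Function.update_of_ne (hwu ▸ hb)]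
    exact hc ha hb hab
  · have hwA : w ∉ A := fun hwA => by
      rcases (hAB ▸ ⟨hwA, hwB⟩ : w ∈ ({u, v} : Set V)) with h | h
      exacts [hwu h, hwv h]
    exact ⟨c, hc, hsame c (hc.mono fun z hz hzw => hwA (hzw ▸ hz))⟩

theorem IsCritical.isCritical_identify (hG : IsCritical k G) (hk : 2 ≤ k) (huv : u ≠ v)
    (hnadj : ¬ G.Adj u v) (hAB : A ∩ B = {u, v})
    (hsame : ForcesSameColor G (Fin (k - 1)) A u v)
    (hdist : ForcesDistinctColors G (Fin (k - 1)) B u v) (hu : u ∈ B) (hv : v ∈ B) :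
    IsCritical k (identify (G.induce B) ⟨u, hu⟩ ⟨v, hv⟩) := by
  have huv' : (⟨u, hu⟩ : B) ≠ ⟨v, hv⟩ := fun h => huv (congrArg Subtype.val h)
  have hnadj' : ¬ (G.induce B).Adj ⟨u, hu⟩ ⟨v, hv⟩ := hnadj
  refine isCritical_of_colorable_induce_deleteEdges ?_ (fun w => ?_) (fun a b hab => ?_)
  · rintro ⟨col⟩
    have : Nonempty (Fin (k - 1)) := ⟨col (identifyMap huv' ⟨u, hu⟩)⟩
    obtain ⟨c, hc, hcol⟩ := exists_properOn_extend (G := G) (fun p => col (identifyMap huv' p))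
      fun p q hpq => col.valid ((identify_adj_iff huv').2
        ⟨identifyMap_ne_of_adj huv' hnadj' hpq, p, q, hpq, rfl, rfl⟩)
    refine hdist c hc ?_
    rw [hcol ⟨u, hu⟩, hcol ⟨v, hv⟩, identifyMap_left]
  · obtain ⟨c, hc, hcuv⟩ := hG.exists_properOn_compl_eq hk huv hAB hsame w.1.2
      fun h => w.2 (Subtype.ext h)
    refine ⟨Coloring.mk (fun a => c a.1.1.1) fun {a b} hab => ?_⟩
    obtain ⟨-, p, q, hpq, hpa, hqb⟩ := (identify_adj_iff huv').1 hab
    change identifyMap huv' p = a.1 at hpa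
    change identifyMap huv' q = b.1 at hqb
    have hne : ∀ {r : B} {a : ({w}ᶜ : Set {z : B // z ≠ ⟨v, hv⟩})},
        identifyMap huv' r = a.1 → r.1 ≠ w.1.1 := fun {r a} hra hrw => by
      rw [Subtype.ext hrw, identifyMap_of_ne huv' w.2] at hra
      exact a.2 (Subtype.ext (congrArg Subtype.val hra.symm))
    have hmap := apply_identifyMap huv' (f := fun r : B => c r) hcuv
    rw [← hpa, ← hqb, hmap, hmap]
    exact hc (hne hpa) (hne hqb) hpq
  · obtain ⟨-, p, q, hpq, rfl, rfl⟩ := (identify_adj_iff huv').1 hab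
    obtain ⟨c⟩ := hG.colorable_deleteEdges hpq
    have hcuv : c u = c v := hsame c (c.properOn_deleteEdges fun h =>
      not_adj_of_mem_pair hnadj (hAB ▸ ⟨h.1, p.2⟩) (hAB ▸ ⟨h.2, q.2⟩) hpq)
    have hmap := apply_identifyMap huv' (f := fun r : B => c r) hcuv
    refine ⟨Coloring.mk (fun a => c a.1.1) fun {a b} hab => ?_⟩
    obtain ⟨hab, hne⟩ := deleteEdges_adj.1 hab
    obtain ⟨-, p', q', hpq', rfl, rfl⟩ := (identify_adj_iff huv').1 hab
    simp only [hmap]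
    refine c.valid (deleteEdges_adj.2 ⟨hpq', fun he => hne ?_⟩)
    rcases Sym2.eq_iff.1 he with ⟨h₁, h₂⟩ | ⟨h₁, h₂⟩
    · rw [Subtype.ext h₁, Subtype.ext h₂]; rfl
    · rw [Subtype.ext h₁, Subtype.ext h₂, Sym2.eq_swap]; rfl

end Identify

end

theorem stmt10_general (k : ℕ) (hk : 4 ≤ k)
    (V : Type) (G : SimpleGraph V) (hG : IsCritical k G)
    (u v : V) (huv : u ≠ v)
    (hdisc : ¬ (G.induce ({u, v}ᶜ : Set V)).Connected) :
    ∃ (A B : Set V) (hu₁ : u ∈ A) (hv₁ : v ∈ A) (hu₂ : u ∈ B) (hv₂ : v ∈ B),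
      A ∪ B = Set.univ ∧
      A ∩ B = {u, v} ∧
      A ≠ Set.univ ∧
      B ≠ Set.univ ∧
      (A \ {u, v}).Nonempty ∧
      (B \ {u, v}).Nonempty ∧
      (G.induce (A \ {u, v})).Connected ∧
      (G.induce (B \ {u, v})).Connected ∧
      (∀ a ∈ A \ {u, v}, ∀ b ∈ B \ {u, v}, ¬ G.Adj a b) ∧
      ¬ G.Adj u v ∧
      (∀ w ∈ B \ {u, v}, ¬ (G.Adj u w ∧ G.Adj v w)) ∧
      IsCritical k (addEdge (G.induce A) ⟨u, hu₁⟩ ⟨v, hv₁⟩) ∧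
      IsCritical k (identify (G.induce B) ⟨u, hu₂⟩ ⟨v, hv₂⟩) := by
  obtain ⟨K₁, K₂, hK₁, hK₂, hdisj, hunion, hconn₁, hconn₂, hsame, hdist⟩ :=
    hG.exists_flaps (by omega) hdisc
  have hne₁ : K₁.Nonempty := Set.nonempty_coe_sort.1 hconn₁.nonempty
  have hne₂ : K₂.Nonempty := Set.nonempty_coe_sort.1 hconn₂.nonempty
  have hAB : (K₁ ∪ {u, v}) ∩ (K₂ ∪ {u, v}) = {u, v} := by
    rw [← Set.inter_union_distrib_right, hdisj.inter_eq, Set.empty_union]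
  have hA : K₁ ∪ {u, v} ≠ Set.univ := hK₂.union_pair_ne_univ hdisj hne₂
  obtain ⟨c, hc⟩ := hG.exists_properOn (by omega) hA
  have hnadj : ¬ G.Adj u v := fun h => hc (by simp) (by simp) h (hsame c hc)
  refine ⟨K₁ ∪ {u, v}, K₂ ∪ {u, v}, by simp, by simp, by simp, by simp, ?_, hAB, hA,
    hK₁.union_pair_ne_univ hdisj.symm hne₁, ?_, ?_, ?_, ?_, ?_, hnadj, ?_,
    hG.isCritical_addEdge (by omega) huv hnadj hAB hA hsame hdist _ _,
    hG.isCritical_identify (by omega) huv hnadj hAB hsame hdist _ _⟩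
  · rw [← Set.union_union_distrib_right, hunion, Set.compl_union_self]
  · rwa [hK₁.union_pair_diff]
  · rwa [hK₂.union_pair_diff]
  · rwa [hK₁.union_pair_diff]
  · rwa [hK₂.union_pair_diff]
  · rw [hK₁.union_pair_diff, hK₂.union_pair_diff]
    exact fun a ha b hb => hK₁.not_adj_of_disjoint hK₂ hdisj ha hb
  · rw [hK₂.union_pair_diff]
    exact fun w hw => hG.notMem_commonNeighbors huv hsame
      fun h => hK₂.union_pair_subset_compl hdisj.symm h hw

theorem stmt10 (k : ℕ) (hk : 4 ≤ k)
    (V : Type) [Fintype V] (G : SimpleGraph V) (hG : IsCritical k G)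
    (u v : V) (huv : u ≠ v)
    (hdisc : ¬ (G.induce ({u, v}ᶜ : Set V)).Connected) :
    ∃ (A B : Set V) (hu₁ : u ∈ A) (hv₁ : v ∈ A) (hu₂ : u ∈ B) (hv₂ : v ∈ B),
      A ∪ B = Set.univ ∧
      A ∩ B = {u, v} ∧
      A ≠ Set.univ ∧
      B ≠ Set.univ ∧
      (A \ {u, v}).Nonempty ∧
      (B \ {u, v}).Nonempty ∧
      (G.induce (A \ {u, v})).Connected ∧
      (G.induce (B \ {u, v})).Connected ∧
      (∀ a ∈ A \ {u, v}, ∀ b ∈ B \ {u, v}, ¬ G.Adj a b) ∧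
      ¬ G.Adj u v ∧
      (∀ w ∈ B \ {u, v}, ¬ (G.Adj u w ∧ G.Adj v w)) ∧
      IsCritical k (addEdge (G.induce A) ⟨u, hu₁⟩ ⟨v, hv₁⟩) ∧
      IsCritical k (identify (G.induce B) ⟨u, hu₂⟩ ⟨v, hv₂⟩) :=
  stmt10_general k hk V G hG u v huv hdisc
end

section
/- Let k ≥ 2 be an integer, let T be a finite tree, let r ∈ V(T), and assume that for every integer l ≥ 1 there are at most k^l vertices at distance exactly l from r in T. Let φ : V(T) → ℕ be a weight function with φ(r) = 0 and φ(t) ≠ 0 for at least one vertex t ∈ V(T). Then there exists a vertex t ∈ V(T), at distance exactly l from r in T for some l, such that φ(t) > 0 and 2l·log k + log φ(t) ≥ log(Σ_{v ∈ V(T)} φ(v)). -/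
/-!
Choose `t` maximising `N := k ^ (2 * dist r t) * φ t`. Every vertex at level `l ≥ 1` then has
weight at most `N / k ^ (2 * l)`, and there are at most `k ^ l` of them, so level `l` carries
total weight at most `N / k ^ l`. As `φ r = 0` and `∑_{l ≥ 1} k ^ (-l) ≤ 1` for `k ≥ 2`, the total
weight is at most `N`; taking logarithms gives the claim.
-/

open SimpleGraph Finset

lemma geom_sum_Ico_one_le_one {x : ℝ} (hx0 : 0 ≤ x) (hx : 2 * x ≤ 1) (n : ℕ) :
    ∑ l ∈ Ico 1 n, x ^ l ≤ 1 := by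
  have hx1 : 0 < 1 - x := by linarith
  calc ∑ l ∈ Ico 1 n, x ^ l ≤ x ^ 1 / (1 - x) := geom_sum_Ico_le_of_lt_one hx0 (by linarith)
    _ ≤ 1 := by rw [pow_one, div_le_one hx1]; linarith

section Levels

variable {ι : Type*} [Fintype ι] {k : ℕ} (d : ι → ℕ) (f : ι → ℕ) {N : ℕ}

lemma pow_mul_sum_level_le (hk : 0 < k) {l : ℕ} (hcard : #{i | d i = l} ≤ k ^ l)
    (hmax : ∀ i, k ^ (2 * d i) * f i ≤ N) :
    k ^ l * ∑ i with d i = l, f i ≤ N := by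
  refine Nat.le_of_mul_le_mul_left ?_ (pow_pos hk l)
  calc k ^ l * (k ^ l * ∑ i with d i = l, f i) = ∑ i with d i = l, k ^ (2 * d i) * f i := by
        rw [← mul_assoc, ← pow_add, ← two_mul, mul_sum]
        exact sum_congr rfl fun i hi => by rw [(mem_filter.mp hi).2]
    _ ≤ #{i | d i = l} * N := by simpa using sum_le_card_nsmul _ _ _ fun i _ => hmax i
    _ ≤ k ^ l * N := Nat.mul_le_mul_right N hcard

lemma sum_le_of_pow_mul_le (hk : 2 ≤ k) (hcard : ∀ l, 1 ≤ l → #{i | d i = l} ≤ k ^ l)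
    (hzero : ∀ i, d i = 0 → f i = 0) (hmax : ∀ i, k ^ (2 * d i) * f i ≤ N) :
    ∑ i, (f i : ℝ) ≤ N := by
  have hk0 : (0 : ℝ) < k := by positivity
  have hlevel : ∀ l, 1 ≤ l → ∑ i with d i = l, (f i : ℝ) ≤ N * (k : ℝ)⁻¹ ^ l := by
    intro l hl
    have h := pow_mul_sum_level_le d f (by omega) (hcard l hl) hmax
    rw [inv_pow, ← div_eq_mul_inv, le_div_iff₀ (by positivity), mul_comm]
    exact_mod_cast h
  have hmaps : ∀ i ∈ univ, d i ∈ Ico 0 (univ.sup d + 1) :=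
    fun i _ => mem_Ico.mpr ⟨Nat.zero_le _, Nat.lt_succ_of_le (le_sup (mem_univ i))⟩
  have hroot : ∑ i with d i = 0, (f i : ℝ) = 0 :=
    sum_eq_zero fun i hi => by simp [hzero i (mem_filter.mp hi).2]
  calc ∑ i, (f i : ℝ) = ∑ l ∈ Ico 1 (univ.sup d + 1), ∑ i with d i = l, (f i : ℝ) := by
        rw [← sum_fiberwise_of_maps_to hmaps, sum_eq_sum_Ico_succ_bot (Nat.succ_pos _), hroot,
          zero_add]
    _ ≤ ∑ l ∈ Ico 1 (univ.sup d + 1), N * (k : ℝ)⁻¹ ^ l :=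
        sum_le_sum fun l hl => hlevel l (mem_Ico.mp hl).1
    _ ≤ N := by
        rw [← mul_sum]
        refine mul_le_of_le_one_right (by positivity) (geom_sum_Ico_one_le_one (by positivity) ?_ _)
        rw [← div_eq_mul_inv, div_le_one hk0]
        exact_mod_cast hk

end Levels

theorem stmt14 (k : ℕ) (hk : 2 ≤ k)
    (V : Type) [Fintype V] (T : SimpleGraph V) (hT : T.IsTree) (r : V)
    (hcount : ∀ l : ℕ, 1 ≤ l → {t : V | T.dist r t = l}.ncard ≤ k ^ l)
    (φ : V → ℕ) (hr : φ r = 0) (hex : ∃ t, φ t ≠ 0) :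
    ∃ t : V, 0 < φ t ∧
      Real.log (∑ v : V, (φ v : ℝ)) ≤
        2 * (T.dist r t : ℝ) * Real.log k + Real.log (φ t) := by
  classical
  obtain ⟨t, -, hmax⟩ := exists_max_image univ (fun v => k ^ (2 * T.dist r v) * φ v) ⟨r, mem_univ r⟩
  obtain ⟨u, hu⟩ := hex
  have hN : 0 < k ^ (2 * T.dist r t) * φ t :=
    (by positivity : 0 < k ^ (2 * T.dist r u) * φ u).trans_le (hmax u (mem_univ u))
  have hφt : 0 < φ t := Nat.pos_of_mul_pos_left hN
  have hsum_le := sum_le_of_pow_mul_le (T.dist r) φ hk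
    (fun l hl => by simpa [← Set.ncard_coe_finset] using hcount l hl)
    (fun v hv => by rwa [← (hT.connected.preconnected r v).dist_eq_zero_iff.mp hv])
    (fun v => hmax v (mem_univ v))
  have hsum_pos : 0 < ∑ v, (φ v : ℝ) :=
    sum_pos' (fun v _ => by positivity) ⟨u, mem_univ u, by exact_mod_cast Nat.pos_of_ne_zero hu⟩
  refine ⟨t, hφt, (Real.log_le_log hsum_pos hsum_le).trans_eq ?_⟩
  push_cast
  rw [Real.log_mul (by positivity) (by positivity), Real.log_pow]
  push_cast
  ring
end

section
/- Let r ≥ 1 be an integer, let G be an r-connected graph, let S and T be two subsets of V(G), each of size at least r, and let P₁, ..., P_{r−1} be pairwise vertex-disjoint paths such that for each i the path P_i has ends s_i ∈ S and t_i ∈ T. Then there exist pairwise vertex-disjoint paths Q₁, ..., Q_r in G, each with one end in S and the other end in T, such that all but one of the paths Q_i have an end in {s₁, ..., s_{r−1}}, and all but one of the paths Q_i have an end in {t₁, ..., t_{r−1}}. -/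
/-!
Call a path that starts in `S` and meets `B` only in its last vertex an `S`–`B` path. The core
is the proof of Menger's theorem by Böhme, Göring and Harant, keeping track of endpoints: if no
`k` vertices separate `S` from `B`, then `k` disjoint `S`–`B` paths `P i` can be traded for `k + 1`
disjoint ones, the `i`-th of which ends where `P i` ends and all but one of which start where
some `P i` starts. Induct on `|V \ B|`. Some `S`–`B` path `R` avoids the ends of the `P i`; if it
misses every `P i`, add it. Otherwise let `x` be the last vertex of `R` on some `P j`, cut `P j`
at `x` and add the tails `xP j` and `xR` to `B`. By induction there are `k + 1` paths to the
larger set, one ending at `x` and one at a new vertex `y`; continuing these two along `xP j` and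
`xR`, or along one of them and the part of the other after `y`, gives paths to `B`.

For the theorem, cut each `P i` at its first vertex `t' i` in `T` and apply this to the initial
segments and `B = T ∪ ⋃ i, t' i P i t i`; then continue the paths along the segments
`t' i P i t i`, except that if the extra path ends inside some `t' i P i t i`, it takes over the
rest of that segment and the path ending at `t' i` stops there. In an `r`-connected graph no
`r - 1` vertices separate two sets of size `r`.
-/

open SimpleGraph

/-- A graph is `t`-connected if it has at least `t+1` vertices and deleting any set of
at most `t-1` vertices leaves it connected. -/
def KConnected {V : Type*} (t : ℕ) (G : SimpleGraph V) : Prop :=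
  t + 1 ≤ Nat.card V ∧ ∀ S : Set V, S.ncard ≤ t - 1 → (G.induce Sᶜ).Connected

namespace SimpleGraph

variable {V : Type*} {G : SimpleGraph V}

namespace Walk

variable {u v w : V}

theorem IsPath.append {p : G.Walk u v} {q : G.Walk v w} (hp : p.IsPath) (hq : q.IsPath)
    (hpq : ∀ x ∈ p.support, x ∈ q.support → x = v) : (p.append q).IsPath := by
  rw [isPath_def, support_append]
  refine hp.support_nodup.append (hq.support_nodup.sublist q.support.tail_sublist) ?_
  intro x hxp hxq
  have hxv := hpq x hxp (List.mem_of_mem_tail hxq)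
  subst hxv
  have := hq.support_nodup
  rw [← cons_tail_support] at this
  exact (List.nodup_cons.mp this).1 hxq

variable [DecidableEq V]

theorem IsPath.eq_of_mem_takeUntil_of_mem_dropUntil {p : G.Walk u v} (hp : p.IsPath)
    (hw : w ∈ p.support) {x : V} (hx₁ : x ∈ (p.takeUntil w hw).support)
    (hx₂ : x ∈ (p.dropUntil w hw).support) : x = w := by
  by_contra hxw
  exact IsPath.ne_of_mem_support_of_append ((p.take_spec hw).symm ▸ hp) hxw hx₁ hx₂ rfl

theorem exists_first_mem_support (p : G.Walk u v) (P : V → Prop) (h : ∃ x ∈ p.support, P x) :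
    ∃ x, ∃ hx : x ∈ p.support, P x ∧
      ∀ y ∈ (p.takeUntil x hx).support, P y → y = x := by
  classical
  have hn : ∃ n, ∃ x, ∃ hx : x ∈ p.support, P x ∧ (p.takeUntil x hx).length = n :=
    let ⟨x, hx, hPx⟩ := h; ⟨_, x, hx, hPx, rfl⟩
  obtain ⟨x, hx, hPx, hlen⟩ := Nat.find_spec hn
  refine ⟨x, hx, hPx, fun y hy hPy => by_contra fun hyx => ?_⟩
  have hy' := p.support_takeUntil_subset_support hx hy
  have hlt := length_takeUntil_lt_length hy hyx
  rw [takeUntil_takeUntil] at hlt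
  exact Nat.find_min hn (hlen ▸ hlt) ⟨y, hy', hPy, rfl⟩

end Walk

/-- With `S = Set.univ`, a `SetPath` is a tail: a path ending at its first vertex in `B`. -/
structure SetPath (G : SimpleGraph V) (S B : Set V) where
  source : V
  target : V
  walk : G.Walk source target
  isPath : walk.IsPath
  source_mem : source ∈ S
  target_mem : target ∈ B
  eq_target_of_mem : ∀ v ∈ walk.support, v ∈ B → v = target

namespace SetPath

variable {S S' B B' : Set V}

abbrev support (p : G.SetPath S B) : List V := p.walk.support

def PairwiseDisjoint {ι : Type*} (p : ι → G.SetPath S B) : Prop :=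
  Pairwise fun i j => (p i).support.Disjoint (p j).support

section PairwiseDisjoint

variable {ι : Type*} {p : ι → G.SetPath S B}

theorem PairwiseDisjoint.target_injective (hp : PairwiseDisjoint p) :
    Function.Injective fun i => (p i).target := fun i j (hij : (p i).target = (p j).target) => by
  by_contra hne
  exact hp hne (p i).walk.end_mem_support (hij ▸ (p j).walk.end_mem_support)

theorem PairwiseDisjoint.mono (hp : PairwiseDisjoint p) {q : ι → G.SetPath S' B'}
    (hq : ∀ i, (q i).support ⊆ (p i).support) : PairwiseDisjoint q :=
  fun _ _ hij _ hvi hvj => hp hij (hq _ hvi) (hq _ hvj)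

theorem PairwiseDisjoint.snoc {k : ℕ} {p : Fin k → G.SetPath S B} (hp : PairwiseDisjoint p)
    {r : G.SetPath S B} (hr : ∀ i, (p i).support.Disjoint r.support) :
    PairwiseDisjoint (Fin.snoc (α := fun _ => G.SetPath S B) p r) := by
  intro i j hij
  induction i using Fin.lastCases <;> induction j using Fin.lastCases
  · exact absurd rfl hij
  · simpa using (hr _).symm
  · simpa using hr _
  · simpa using hp (fun h => hij (congrArg _ h))

end PairwiseDisjoint

def nil {b : V} (hb : b ∈ B) : G.SetPath Set.univ B :=
  ⟨b, b, .nil, .nil, trivial, hb, by simp⟩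

theorem nil_support {b : V} (hb : b ∈ B) : (nil hb : G.SetPath Set.univ B).support = [b] := rfl

def enlarge (p : G.SetPath S B) (hBB' : B ⊆ B') (h : ∀ v ∈ p.support, v ∈ B' → v ∈ B) :
    G.SetPath S B' :=
  ⟨p.source, p.target, p.walk, p.isPath, p.source_mem, hBB' p.target_mem,
    fun v hv hvB' => p.eq_target_of_mem v hv (h v hv hvB')⟩

section Decomp

variable [DecidableEq V]

def takeUntil (p : G.SetPath S B) (x : V) (hx : x ∈ p.support) (hxB' : x ∈ B')
    (h : ∀ v ∈ (p.walk.takeUntil x hx).support, v ∈ B' → v = x) : G.SetPath S B' :=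
  ⟨p.source, x, p.walk.takeUntil x hx, p.isPath.takeUntil hx, p.source_mem, hxB', h⟩

def dropUntil (p : G.SetPath S B) (x : V) (hx : x ∈ p.support) : G.SetPath Set.univ B :=
  ⟨x, p.target, p.walk.dropUntil x hx, p.isPath.dropUntil hx, trivial, p.target_mem,
    fun v hv => p.eq_target_of_mem v (p.walk.support_dropUntil_subset_support hx hv)⟩

end Decomp

theorem mem_support_of_mem_of_target_eq {p : G.SetPath S B'} {e : G.SetPath S' B}
    (h : p.target = e.source) {v : V} (hv : v ∈ p.support) (hvB' : v ∈ B') : v ∈ e.support :=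
  p.eq_target_of_mem v hv hvB' ▸ h ▸ e.walk.start_mem_support

def append (p : G.SetPath S B') (e : G.SetPath Set.univ B) (h : p.target = e.source)
    (hBB' : B ⊆ B') (he : ∀ v ∈ e.support, v ∈ B') : G.SetPath S B where
  source := p.source
  target := e.target
  walk := p.walk.append (e.walk.copy h.symm rfl)
  isPath := p.isPath.append (by simpa using e.isPath) fun v hvp hve =>
    p.eq_target_of_mem v hvp (he v (by simpa using hve))
  source_mem := p.source_mem
  target_mem := e.target_mem
  eq_target_of_mem v hv hvB := by
    rw [Walk.mem_support_append_iff, Walk.support_copy] at hv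
    exact e.eq_target_of_mem v (hv.elim (mem_support_of_mem_of_target_eq h · (hBB' hvB)) id) hvB

theorem PairwiseDisjoint.append {ι : Type*} {p : ι → G.SetPath S B'} (hp : PairwiseDisjoint p)
    {e : ι → G.SetPath Set.univ B} (he : PairwiseDisjoint e)
    (h : ∀ i, (p i).target = (e i).source)
    (hBB' : B ⊆ B') (heB' : ∀ i, ∀ v ∈ (e i).support, v ∈ B') :
    PairwiseDisjoint fun i => (p i).append (e i) (h i) hBB' (heB' i) := by
  intro i j hij v hvi hvj
  simp only [SetPath.append, support, Walk.mem_support_append_iff, Walk.support_copy] at hvi hvj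
  rcases hvi with hvi | hvi <;> rcases hvj with hvj | hvj
  · exact hp hij hvi hvj
  · exact he hij (mem_support_of_mem_of_target_eq (h i) hvi (heB' j v hvj)) hvj
  · exact he hij hvi (mem_support_of_mem_of_target_eq (h j) hvj (heB' i v hvi))
  · exact he hij hvi hvj

theorem exists_support_subset_of_walk {a c : V} (W : G.Walk a c) (ha : a ∈ S) (hc : c ∈ B) :
    ∃ p : G.SetPath S B, p.support ⊆ W.support := by
  classical
  obtain ⟨x, hx, hxB, hfirst⟩ :=
    W.bypass.exists_first_mem_support (· ∈ B) ⟨c, W.bypass.end_mem_support, hc⟩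
  exact ⟨⟨a, x, _, W.bypass_isPath.takeUntil hx, ha, hxB, hfirst⟩,
    fun v hv => W.support_bypass_subset_support (W.bypass.support_takeUntil_subset_support hx hv)⟩

theorem PairwiseDisjoint.exists_append_snoc {k : ℕ} {q : Fin (k + 1) → G.SetPath S B'}
    (hq : PairwiseDisjoint q) (hBB' : B ⊆ B') {e : Fin k → G.SetPath Set.univ B}
    (he : PairwiseDisjoint e) {r : G.SetPath Set.univ B}
    (her : ∀ i, (e i).support.Disjoint r.support)
    (hqe : ∀ i, (q i.castSucc).target = (e i).source) (hqr : (q (Fin.last k)).target = r.source)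
    (heB' : ∀ i, ∀ v ∈ (e i).support, v ∈ B') (hrB' : ∀ v ∈ r.support, v ∈ B') :
    ∃ q' : Fin (k + 1) → G.SetPath S B, PairwiseDisjoint q' ∧
      (∀ m, (q' m).source = (q m).source) ∧ (∀ i, (q' i.castSucc).target = (e i).target) ∧
      (q' (Fin.last k)).target = r.target := by
  have hjoin : ∀ m, (q m).target = (Fin.snoc (α := fun _ => _) e r m).source :=
    Fin.lastCases (by simpa using hqr) fun i => by simpa using hqe i
  have hB' : ∀ m, ∀ v ∈ (Fin.snoc (α := fun _ => _) e r m).support, v ∈ B' :=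
    Fin.lastCases (by simpa using hrB') fun i => by simpa using heB' i
  exact ⟨_, hq.append (he.snoc her) hjoin hBB' hB', fun m => rfl,
    fun i => by simp [SetPath.append], by simp [SetPath.append]⟩

theorem PairwiseDisjoint.exists_extend_two {k : ℕ} {q : Fin (k + 1) → G.SetPath S B'}
    (hq : PairwiseDisjoint q) (hBB' : B ⊆ B') (j : Fin k) (C W : G.SetPath Set.univ B)
    (hC : (q j.castSucc).target = C.source) (hW : (q (Fin.last k)).target = W.source)
    (hCW : C.support.Disjoint W.support) (hCB' : ∀ v ∈ C.support, v ∈ B')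
    (hWB' : ∀ v ∈ W.support, v ∈ B')
    (htarget : ∀ i ≠ j, (q i.castSucc).target ∈ B ∧ (q i.castSucc).target ∉ C.support ∧
      (q i.castSucc).target ∉ W.support) :
    ∃ q' : Fin (k + 1) → G.SetPath S B, PairwiseDisjoint q' ∧
      (∀ m, (q' m).source = (q m).source) ∧ (q' j.castSucc).target = C.target ∧
      (∀ i ≠ j, (q' i.castSucc).target = (q i.castSucc).target) ∧
      (q' (Fin.last k)).target = W.target := by
  classical
  let e i : G.SetPath Set.univ B := if h : i = j then C else nil (htarget i h).1
  have he : PairwiseDisjoint e := fun i i' hii' => by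
    by_cases hi : i = j <;> by_cases hi' : i' = j
    · exact absurd (hi.trans hi'.symm) hii'
    · simpa [e, hi, hi', nil_support] using (htarget i' hi').2.1
    · simpa [e, hi, hi', nil_support] using (htarget i hi).2.1
    · simpa [e, hi, hi', nil_support] using
        (hq.target_injective.ne (Fin.castSucc_injective _ |>.ne hii')).symm
  have her : ∀ i, (e i).support.Disjoint W.support := fun i => by
    by_cases hi : i = j
    · simpa [e, hi] using hCW
    · simpa [e, hi, nil_support] using (htarget i hi).2.2
  have heB' : ∀ i, ∀ v ∈ (e i).support, v ∈ B' := fun i => by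
    by_cases hi : i = j
    · simpa [e, hi] using hCB'
    · simp [e, hi, nil_support, hBB' (htarget i hi).1]
  obtain ⟨q', hq', hsource, he_target, hW_target⟩ := hq.exists_append_snoc hBB' he her
    (fun i => by by_cases hi : i = j <;> simp [e, hi, hC, nil]) hW heB' hWB'
  exact ⟨q', hq', hsource, by simpa [e] using he_target j,
    fun i hi => by simpa [e, hi, nil] using he_target i, hW_target⟩

theorem disjoint_dropUntil [DecidableEq V] {C D : G.SetPath Set.univ B}
    (hCD : ∀ v ∈ C.support, v ∈ D.support → v = C.source) {y : V} (hy : y ∈ C.support)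
    (hyC : y ≠ C.source) : D.support.Disjoint (C.dropUntil y hy).support := by
  intro v hvD hvy
  have hv : v = C.source := hCD v (C.walk.support_dropUntil_subset_support hy hvy) hvD
  rw [hv] at hvy
  exact hyC (C.isPath.eq_of_mem_takeUntil_of_mem_dropUntil hy
    (C.walk.takeUntil y hy).start_mem_support hvy).symm

theorem PairwiseDisjoint.exists_reroute {k : ℕ} {C D : G.SetPath Set.univ B}
    {q : Fin (k + 1) → G.SetPath S (B ∪ {v | v ∈ C.support} ∪ {v | v ∈ D.support})}
    (hq : PairwiseDisjoint q) (j : Fin k) (hC : (q j.castSucc).target = C.source)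
    (hD : (q j.castSucc).target = D.source)
    (hCD : ∀ v ∈ C.support, v ∈ D.support → v = C.source)
    (htarget : ∀ i ≠ j, (q i.castSucc).target ∈ B ∧ (q i.castSucc).target ∉ C.support ∧
      (q i.castSucc).target ∉ D.support) :
    ∃ (q' : Fin (k + 1) → G.SetPath S B) (σ : Equiv.Perm (Fin (k + 1))),
      PairwiseDisjoint q' ∧
      (∀ m, (q' m).source = (q (σ m)).source) ∧ (q' j.castSucc).target = C.target ∧
      ∀ i ≠ j, (q' i.castSucc).target = (q i.castSucc).target := by
  classical
  set y := (q (Fin.last k)).target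
  have hyB' : y ∈ B ∪ {v | v ∈ C.support} ∪ {v | v ∈ D.support} :=
    (q (Fin.last k)).target_mem
  have hyi : ∀ i : Fin k, y ≠ (q i.castSucc).target := fun i =>
    hq.target_injective.ne (Fin.castSucc_lt_last i).ne'
  have hyC₀ : y ≠ C.source := hC ▸ hyi j
  have hBB' : B ⊆ B ∪ {v | v ∈ C.support} ∪ {v | v ∈ D.support} :=
    fun v hv => .inl (.inl hv)
  have hCB' : ∀ v ∈ C.support, v ∈ B ∪ {v | v ∈ C.support} ∪ {v | v ∈ D.support} :=
    fun v hv => .inl (.inr hv)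
  have hDB' : ∀ v ∈ D.support, v ∈ B ∪ {v | v ∈ C.support} ∪ {v | v ∈ D.support} :=
    fun v hv => .inr hv
  by_cases hyC : y ∈ C.support
  · have hsub := C.walk.support_dropUntil_subset_support hyC
    obtain ⟨q', hq', hsource, -, hi, hlast⟩ := hq.exists_extend_two hBB' j D (C.dropUntil y hyC)
      hD rfl (disjoint_dropUntil hCD hyC hyC₀) hDB' (fun v hv => hCB' v (hsub hv))
      (fun i hi => ⟨(htarget i hi).1, (htarget i hi).2.2, fun h => (htarget i hi).2.1 (hsub h)⟩)
    -- now the last path ends at `C.target`, so it takes the place of the `j`-th one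
    let σ := Equiv.swap j.castSucc (Fin.last k)
    refine ⟨q' ∘ σ, σ, hq'.comp_of_injective σ.injective, fun m => hsource _, ?_,
      fun i hij => ?_⟩
    · simpa [σ, SetPath.dropUntil] using hlast
    · rw [Function.comp_apply, Equiv.swap_apply_of_ne_of_ne
        (Fin.castSucc_injective _ |>.ne hij) (Fin.castSucc_lt_last i).ne, hi i hij]
  · obtain ⟨W, hW, hWD, hCW⟩ : ∃ W : G.SetPath Set.univ B, y = W.source ∧
        (∀ v ∈ W.support, v = y ∨ v ∈ D.support) ∧ C.support.Disjoint W.support := by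
      by_cases hyD : y ∈ D.support
      · refine ⟨D.dropUntil y hyD, rfl,
          fun v hv => .inr (D.walk.support_dropUntil_subset_support hyD hv), ?_⟩
        exact disjoint_dropUntil (fun v hvD hvC => (hCD v hvC hvD).trans (hC.symm.trans hD)) hyD
          (hD ▸ hyi j)
      · have hyB : y ∈ B := by simpa [hyC, hyD] using hyB'
        exact ⟨nil hyB, rfl, by simp [nil_support], by simpa [nil_support] using hyC⟩
    obtain ⟨q', hq', hsource, hj, hi, -⟩ := hq.exists_extend_two hBB' j C W hC hW hCW hCB'
      (fun v hv => (hWD v hv).elim (· ▸ hyB') (hDB' v))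
      (fun i hi => ⟨(htarget i hi).1, (htarget i hi).2.1,
        fun h => (hWD _ h).elim (hyi i).symm (htarget i hi).2.2⟩)
    exact ⟨q', 1, hq', hsource, hj, hi⟩

theorem exists_tail_from_last_meet {ι : Type*} (p : ι → G.SetPath S B)
    (R : G.SetPath S B) (hR : ∃ v ∈ R.support, ∃ i, v ∈ (p i).support) :
    ∃ (j : ι) (x : V) (D : G.SetPath Set.univ B), x ∈ (p j).support ∧ D.source = x ∧
      D.support ⊆ R.support ∧ ∀ i, ∀ v ∈ D.support, v ∈ (p i).support → v = x := by
  classical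
  obtain ⟨x, hx, ⟨j, hxj⟩, hlast⟩ := R.walk.reverse.exists_first_mem_support
    (fun v => ∃ i, v ∈ (p i).support) (by simpa using hR)
  have hsub : ((R.walk.reverse.takeUntil x hx).reverse).support ⊆ R.support := fun v hv => by
    simpa using R.walk.reverse.support_takeUntil_subset_support hx (by simpa using hv)
  refine ⟨j, x, ⟨x, R.target, _, (R.isPath.reverse.takeUntil hx).reverse, trivial, R.target_mem,
    fun v hv => R.eq_target_of_mem v (hsub hv)⟩, hxj, rfl, hsub, fun i v hv hvi => ?_⟩
  exact hlast v (by simpa [support] using hv) ⟨i, hvi⟩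

theorem PairwiseDisjoint.exists_truncate [DecidableEq V] {ι : Type*}
    {p : ι → G.SetPath S B} (hp : PairwiseDisjoint p) {j : ι} {x : V} (hx : x ∈ (p j).support)
    {D : G.SetPath Set.univ B} (hDx : D.source = x)
    (hDp : ∀ i, ∀ v ∈ D.support, v ∈ (p i).support → v = x) :
    ∃ p' : ι →
        G.SetPath S (B ∪ {v | v ∈ ((p j).dropUntil x hx).support} ∪ {v | v ∈ D.support}),
      PairwiseDisjoint p' ∧ (∀ i, (p' i).source = (p i).source) ∧ (p' j).target = x ∧
      ∀ i ≠ j, (p' i).target = (p i).target := by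
  classical
  set C := (p j).dropUntil x hx
  have hCsub := (p j).walk.support_dropUntil_subset_support hx
  have hAsub := (p j).walk.support_takeUntil_subset_support hx
  have hCA : ∀ v ∈ ((p j).walk.takeUntil x hx).support, v ∈ C.support → v = x :=
    fun v => (p j).isPath.eq_of_mem_takeUntil_of_mem_dropUntil hx
  have hA : ∀ v ∈ ((p j).walk.takeUntil x hx).support,
      v ∈ B ∪ {v | v ∈ C.support} ∪ {v | v ∈ D.support} → v = x := by
    rintro v hv ((hvB | hvC) | hvD)
    · exact hCA v hv ((p j).eq_target_of_mem v (hAsub hv) hvB ▸ C.walk.end_mem_support)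
    · exact hCA v hv hvC
    · exact hDp j v hvD (hAsub hv)
  have hpi : ∀ i ≠ j, ∀ v ∈ (p i).support, v ∉ C.support ∧ v ∉ D.support :=
    fun i hij v hv =>
      ⟨fun hvC => hp hij hv (hCsub hvC), fun hvD => hp hij hv (hDp i v hvD hv ▸ hx)⟩
  let p' i : G.SetPath S (B ∪ {v | v ∈ C.support} ∪ {v | v ∈ D.support}) :=
    if h : i = j then (p j).takeUntil x hx (.inr (hDx ▸ D.walk.start_mem_support)) hA
    else (p i).enlarge (fun v hv => .inl (.inl hv)) fun v hv => by
      rintro ((hvB | hvC) | hvD)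
      exacts [hvB, absurd hvC (hpi i h v hv).1, absurd hvD (hpi i h v hv).2]
  refine ⟨p', hp.mono fun i => ?_, fun i => ?_, by simp [p', takeUntil], fun i hi => ?_⟩
  · by_cases h : i = j
    · subst h; simpa [p', takeUntil] using hAsub
    · simp [p', h, enlarge]
  · by_cases h : i = j
    · subst h; simp [p', takeUntil]
    · simp [p', h, enlarge]
  · simp [p', hi, enlarge]

end SetPath

def NoSmallSeparator (G : SimpleGraph V) (S B : Set V) (k : ℕ) : Prop :=
  ∀ X : Set V, X.ncard ≤ k → ∃ p : G.SetPath S B, ∀ v ∈ p.support, v ∉ X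

theorem NoSmallSeparator.mono {S B B' : Set V} {k : ℕ} (h : G.NoSmallSeparator S B k)
    (hBB' : B ⊆ B') : G.NoSmallSeparator S B' k := fun X hX => by
  obtain ⟨p, hp⟩ := h X hX
  obtain ⟨q, hq⟩ :=
    SetPath.exists_support_subset_of_walk p.walk p.source_mem (hBB' p.target_mem)
  exact ⟨q, fun v hv => hp v (hq hv)⟩

open SetPath in
theorem NoSmallSeparator.exists_pairwiseDisjoint_succ [Finite V] {S B : Set V} {k : ℕ}
    (hB : G.NoSmallSeparator S B k) (p : Fin k → G.SetPath S B) (hp : PairwiseDisjoint p) :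
    ∃ q : Fin (k + 1) → G.SetPath S B, PairwiseDisjoint q ∧
      (∀ i, (q i.castSucc).target = (p i).target) ∧
      ∃ m₀, ∀ m ≠ m₀, ∃ i, (q m).source = (p i).source := by
  classical
  induction hn : Bᶜ.ncard using Nat.strong_induction_on generalizing B with
  | _ n ih =>
  obtain ⟨R, hR⟩ := hB (Set.range fun i => (p i).target)
    (by simp [Set.ncard_range_of_injective hp.target_injective])
  by_cases hmeet : ∃ v ∈ R.support, ∃ i, v ∈ (p i).support
  swap
  · push Not at hmeet
    refine ⟨Fin.snoc (α := fun _ => _) p R, hp.snoc fun i v hvi hvR => hmeet v hvR i hvi,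
      fun i => by simp, Fin.last k, fun m hm => ?_⟩
    obtain ⟨i, rfl⟩ := Fin.exists_castSucc_eq.mpr hm
    exact ⟨i, by simp⟩
  obtain ⟨j, x, D, hx, hDx, hDR, hDp⟩ := exists_tail_from_last_meet p R hmeet
  set C := (p j).dropUntil x hx
  have hxB : x ∉ B := fun hxB =>
    hR x (hDR (hDx ▸ D.walk.start_mem_support)) ⟨j, ((p j).eq_target_of_mem x hx hxB).symm⟩
  have hCD : ∀ v ∈ C.support, v ∈ D.support → v = C.source := fun v hvC hvD =>
    hDp j v hvD ((p j).walk.support_dropUntil_subset_support hx hvC)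
  obtain ⟨p', hp', hsource', hj', hi'⟩ := hp.exists_truncate hx hDx hDp
  have hlt : (B ∪ {v | v ∈ C.support} ∪ {v | v ∈ D.support})ᶜ.ncard < n :=
    hn ▸ Set.ncard_lt_ncard (compl_lt_compl_iff_lt.mpr
      (Set.ssubset_iff_of_subset (fun v hv => .inl (.inl hv)) |>.mpr
        ⟨x, .inl (.inr C.walk.start_mem_support), hxB⟩))
  obtain ⟨q', hq', htarget', m₀, hm₀⟩ :=
    ih _ hlt (hB.mono fun v hv => .inl (.inl hv)) p' hp' rfl
  have htarget : ∀ i ≠ j, (q' i.castSucc).target = (p i).target :=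
    fun i hi => (htarget' i).trans (hi' i hi)
  obtain ⟨q, σ, hq, hsource, hj, hi⟩ := hq'.exists_reroute j ((htarget' j).trans hj')
    ((htarget' j).trans (hj'.trans hDx.symm)) hCD fun i hij => by
      have hend := (p i).walk.end_mem_support
      rw [htarget i hij]
      exact ⟨(p i).target_mem,
        fun h => hp hij hend ((p j).walk.support_dropUntil_subset_support hx h),
        fun h => hp hij hend (hDp i _ h hend ▸ hx)⟩
  refine ⟨q, hq, fun i => ?_, σ.symm m₀, fun m hm => ?_⟩
  · by_cases hij : i = j
    · subst hij; exact hj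
    · exact (hi i hij).trans (htarget i hij)
  · obtain ⟨i, hi⟩ := hm₀ (σ m) (by simpa [Equiv.eq_symm_apply] using hm)
    exact ⟨i, (hsource m).trans (hi.trans (hsource' i))⟩

theorem eq_of_mem_insert_range {ι : Type*} {t' t : ι → V} {M : ∀ i, G.Walk (t' i) (t i)}
    (hM : Pairwise fun i j => (M i).support.Disjoint (M j).support) {i : ι} {l : List V}
    (hl : l ⊆ (M i).support) {e : V} (he : e ∉ l) {v : V} (hv : v ∈ l)
    (hvB : v ∈ insert e (Set.range t)) : v = t i := by
  obtain rfl | ⟨i', rfl⟩ := hvB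
  · exact absurd hv he
  · by_contra hne
    exact hM (fun h => hne (congrArg t h)) (M i').end_mem_support (hl hv)

namespace SetPath.PairwiseDisjoint

variable {S T : Set V} {k : ℕ} {t' t : Fin k → V} {M : ∀ i, G.Walk (t' i) (t i)}
  {q : Fin (k + 1) → G.SetPath S (T ∪ {v | ∃ i, v ∈ (M i).support})}

theorem exists_extend_along_of_mem (hM : ∀ i, (M i).IsPath)
    (hMdisj : Pairwise fun i j => (M i).support.Disjoint (M j).support) (ht' : ∀ i, t' i ∈ T)
    (hq : PairwiseDisjoint q) (htarget : ∀ i, (q i.castSucc).target = t' i) {i₀ : Fin k}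
    (hf : (q (Fin.last k)).target ∈ (M i₀).support) :
    ∃ q' : Fin (k + 1) → G.SetPath S (insert (t' i₀) (Set.range t)), PairwiseDisjoint q' ∧
      (∀ m, (q' m).source = (q m).source) ∧
      ∀ m ≠ i₀.castSucc, ∃ i, (q' m).target = t i := by
  classical
  have hsub := (M i₀).support_dropUntil_subset_support hf
  have ht'f : t' i₀ ∉ ((M i₀).dropUntil _ hf).support := fun h =>
    hq.target_injective.ne (Fin.castSucc_lt_last i₀).ne <| (htarget i₀).trans
      ((hM i₀).eq_of_mem_takeUntil_of_mem_dropUntil hf (Walk.start_mem_support _) h)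
  have ht'M : ∀ i ≠ i₀, t' i₀ ∉ (M i).support := fun i hi h =>
    hMdisj hi h (M i₀).start_mem_support
  let e i : G.SetPath Set.univ (insert (t' i₀) (Set.range t)) :=
    if h : i = i₀ then nil (Set.mem_insert _ _) else
      ⟨t' i, t i, M i, hM i, trivial, .inr ⟨i, rfl⟩,
        fun _ => eq_of_mem_insert_range hMdisj (List.Subset.refl _) (ht'M i h)⟩
  have he : PairwiseDisjoint e := fun i i' hii' => by
    by_cases hi : i = i₀ <;> by_cases hi' : i' = i₀
    · exact absurd (hi.trans hi'.symm) hii'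
    · simpa [e, hi, hi', nil_support] using ht'M i' hi'
    · simpa [e, hi, hi', nil_support] using ht'M i hi
    · simpa [e, hi, hi'] using hMdisj hii'
  have her : ∀ i, (e i).support.Disjoint ((M i₀).dropUntil _ hf).support := fun i => by
    by_cases hi : i = i₀
    · simpa [e, hi, nil_support] using ht'f
    · rw [show e i = _ from dif_neg hi]
      exact fun v hvi hv => hMdisj hi hvi (hsub hv)
  have heB₀ : ∀ i, ∀ v ∈ (e i).support, v ∈ T ∪ {v | ∃ i, v ∈ (M i).support} := by
    intro i
    by_cases hi : i = i₀
    · simp [e, hi, nil_support, ht' i₀]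
    · simpa [e, hi] using fun v hv => .inr ⟨i, hv⟩
  obtain ⟨q', hq', hsource, he_target, hlast⟩ := hq.exists_append_snoc
    (Set.insert_subset (.inl (ht' i₀)) (Set.range_subset_iff.mpr fun i =>
      .inr ⟨i, (M i).end_mem_support⟩)) he
    (r := ⟨_, t i₀, _, (hM i₀).dropUntil hf, trivial, .inr ⟨i₀, rfl⟩,
      fun _ => eq_of_mem_insert_range hMdisj hsub ht'f⟩) her
    (fun i => by by_cases hi : i = i₀ <;> simp [e, hi, htarget, nil]) rfl heB₀
    fun v hv => .inr ⟨i₀, hsub hv⟩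
  refine ⟨q', hq', hsource, fun m hm => ?_⟩
  induction m using Fin.lastCases with
  | last => exact ⟨i₀, hlast⟩
  | cast i => exact ⟨i, by simpa [e, show i ≠ i₀ by simpa using hm] using he_target i⟩

theorem exists_extend_along_of_forall_notMem (hM : ∀ i, (M i).IsPath)
    (hMdisj : Pairwise fun i j => (M i).support.Disjoint (M j).support)
    (hq : PairwiseDisjoint q) (htarget : ∀ i, (q i.castSucc).target = t' i)
    (hf : ∀ i, (q (Fin.last k)).target ∉ (M i).support) :
    ∃ q' : Fin (k + 1) → G.SetPath S (insert (q (Fin.last k)).target (Set.range t)),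
      PairwiseDisjoint q' ∧ (∀ m, (q' m).source = (q m).source) ∧
      ∀ m ≠ Fin.last k, ∃ i, (q' m).target = t i := by
  let e i : G.SetPath Set.univ (insert (q (Fin.last k)).target (Set.range t)) :=
    ⟨t' i, t i, M i, hM i, trivial, .inr ⟨i, rfl⟩,
      fun _ => eq_of_mem_insert_range hMdisj (List.Subset.refl _) (hf i)⟩
  obtain ⟨q', hq', hsource, he_target, -⟩ := hq.exists_append_snoc
    (Set.insert_subset (q (Fin.last k)).target_mem (Set.range_subset_iff.mpr fun i =>
      .inr ⟨i, (M i).end_mem_support⟩)) (e := e) (fun i i' hii' => hMdisj hii')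
    (r := nil (Set.mem_insert _ _)) (fun i => by simpa [nil_support] using hf i) htarget rfl
    (fun i v hv => .inr ⟨i, hv⟩) (by simpa [nil_support] using (q (Fin.last k)).target_mem)
  refine ⟨q', hq', hsource, fun m hm => ?_⟩
  obtain ⟨i, rfl⟩ := Fin.exists_castSucc_eq.mpr hm
  exact ⟨i, he_target i⟩

theorem exists_extend_along (hM : ∀ i, (M i).IsPath)
    (hMdisj : Pairwise fun i j => (M i).support.Disjoint (M j).support) (ht' : ∀ i, t' i ∈ T)
    (ht : ∀ i, t i ∈ T) (hq : PairwiseDisjoint q)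
    (htarget : ∀ i, (q i.castSucc).target = t' i) :
    ∃ B ⊆ T, ∃ q' : Fin (k + 1) → G.SetPath S B, PairwiseDisjoint q' ∧
      (∀ m, (q' m).source = (q m).source) ∧
      ∃ m₁, ∀ m ≠ m₁, ∃ i, (q' m).target = t i := by
  have hrange : Set.range t ⊆ T := Set.range_subset_iff.mpr ht
  by_cases hf : ∃ i₀, (q (Fin.last k)).target ∈ (M i₀).support
  · obtain ⟨i₀, hf⟩ := hf
    obtain ⟨q', hq', hsource, htarget'⟩ :=
      hq.exists_extend_along_of_mem hM hMdisj ht' htarget hf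
    exact ⟨_, Set.insert_subset (ht' i₀) hrange, q', hq', hsource, _, htarget'⟩
  · push Not at hf
    obtain ⟨q', hq', hsource, htarget'⟩ := hq.exists_extend_along_of_forall_notMem hM hMdisj
      htarget hf
    have hfT := (q (Fin.last k)).target_mem.resolve_right fun ⟨i, hi⟩ => hf i hi
    exact ⟨_, Set.insert_subset hfT hrange, q', hq', hsource, _, htarget'⟩

end SetPath.PairwiseDisjoint

open SetPath in
theorem NoSmallSeparator.exists_linkage [Finite V] {S T : Set V} {k : ℕ}
    (hST : G.NoSmallSeparator S T k) (s t : Fin k → V) (hs : ∀ i, s i ∈ S)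
    (ht : ∀ i, t i ∈ T) (P : ∀ i, G.Walk (s i) (t i)) (hP : ∀ i, (P i).IsPath)
    (hdisj : Pairwise fun i j => (P i).support.Disjoint (P j).support) :
    ∃ B ⊆ T, ∃ q : Fin (k + 1) → G.SetPath S B, PairwiseDisjoint q ∧
      (∃ m₀, ∀ m ≠ m₀, ∃ i, (q m).source = s i) ∧
      ∃ m₁, ∀ m ≠ m₁, ∃ i, (q m).target = t i := by
  classical
  choose t' ht'P ht'T hfirst using fun i =>
    (P i).exists_first_mem_support (· ∈ T) ⟨t i, (P i).end_mem_support, ht i⟩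
  let M i := (P i).dropUntil (t' i) (ht'P i)
  have hMP i : (M i).support ⊆ (P i).support := (P i).support_dropUntil_subset_support _
  have hAP i : ((P i).takeUntil (t' i) (ht'P i)).support ⊆ (P i).support :=
    (P i).support_takeUntil_subset_support _
  let A i : G.SetPath S (T ∪ {v | ∃ i, v ∈ (M i).support}) :=
    ⟨s i, t' i, _, (hP i).takeUntil _, hs i, .inl (ht'T i), by
      rintro v hv (hvT | ⟨l, hvl⟩)
      · exact hfirst i v hv hvT
      · obtain rfl : l = i := by_contra fun hli => hdisj hli (hMP l hvl) (hAP i hv)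
        exact (hP l).eq_of_mem_takeUntil_of_mem_dropUntil _ hv hvl⟩
  obtain ⟨q, hq, htarget, m₀, hm₀⟩ :=
    (hST.mono Set.subset_union_left).exists_pairwiseDisjoint_succ A
      fun i j hij v hvi hvj => hdisj hij (hAP i hvi) (hAP j hvj)
  obtain ⟨B, hBT, q', hq', hsource, hm₁⟩ :=
    hq.exists_extend_along (M := M) (fun i => (hP i).dropUntil _)
      (fun i j hij v hvi hvj => hdisj hij (hMP i hvi) (hMP j hvj)) ht'T ht htarget
  exact ⟨B, hBT, q', hq', ⟨m₀, fun m hm => hsource m ▸ hm₀ m hm⟩, hm₁⟩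

end SimpleGraph

theorem KConnected.noSmallSeparator {V : Type*} [Finite V] {G : SimpleGraph V} {k : ℕ}
    {S T : Set V} (hG : KConnected (k + 1) G) (hS : k + 1 ≤ S.ncard) (hT : k + 1 ≤ T.ncard) :
    G.NoSmallSeparator S T k := fun X hX => by
  obtain ⟨a, haS, haX⟩ := Set.exists_mem_notMem_of_ncard_lt_ncard (by omega : X.ncard < S.ncard)
  obtain ⟨c, hcT, hcX⟩ := Set.exists_mem_notMem_of_ncard_lt_ncard (by omega : X.ncard < T.ncard)
  obtain ⟨W⟩ := (hG.2 X (by simpa using hX)).preconnected ⟨a, haX⟩ ⟨c, hcX⟩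
  obtain ⟨p, hp⟩ :=
    SetPath.exists_support_subset_of_walk (W.map (Embedding.induce _).toHom) haS hcT
  refine ⟨p, fun v hv => ?_⟩
  obtain ⟨⟨u, hu⟩, -, rfl⟩ := List.mem_map.mp (Walk.support_map _ _ ▸ hp hv)
  exact hu

theorem stmt16 (r : ℕ) (hr : 1 ≤ r)
    (V : Type) [Fintype V] (G : SimpleGraph V) (hG : KConnected r G)
    (S T : Set V) (hS : r ≤ S.ncard) (hT : r ≤ T.ncard)
    (s t : Fin (r - 1) → V) (hs : ∀ i, s i ∈ S) (ht : ∀ i, t i ∈ T)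
    (P : ∀ i : Fin (r - 1), G.Walk (s i) (t i)) (hP : ∀ i, (P i).IsPath)
    (hdisj : ∀ i j, i ≠ j → ∀ w : V, w ∈ (P i).support → w ∉ (P j).support) :
    ∃ (a b : Fin r → V) (Q : ∀ i : Fin r, G.Walk (a i) (b i)),
      (∀ i, a i ∈ S) ∧ (∀ i, b i ∈ T) ∧
      (∀ i, (Q i).IsPath) ∧
      (∀ i j, i ≠ j → ∀ w : V, w ∈ (Q i).support → w ∉ (Q j).support) ∧
      (∃ i₀ : Fin r, ∀ i, i ≠ i₀ → ∃ j, a i = s j) ∧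
      (∃ i₁ : Fin r, ∀ i, i ≠ i₁ → ∃ j, b i = t j) := by
  -- `Fin (k + 1 - 1)` is definitionally `Fin k`
  obtain ⟨k, rfl⟩ : ∃ k, r = k + 1 := ⟨r - 1, by omega⟩
  obtain ⟨B, hBT, q, hq, hsource, htarget⟩ :=
    (hG.noSmallSeparator hS hT).exists_linkage s t hs ht P hP fun i j hij => hdisj i j hij
  exact ⟨_, _, fun m => (q m).walk, fun m => (q m).source_mem, fun m => hBT (q m).target_mem,
    fun m => (q m).isPath, fun i j hij w hwi hwj => hq hij hwi hwj, hsource, htarget⟩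
end

section
/- For every integer k ≥ 4 there are infinitely many integers n such that there exists a k-critical graph on n vertices in which every path has length at most 4(k−1)·(log n)/(log(k−2)). -/
/-!
Write `k = t + 2` and fix a depth `d ≥ 1`. Take a clique on `t` apexes and a tree built on the
words `l` of length at most `d` over the alphabet `Fin t`: each word carries a vertex `stem l` and
a vertex `fork l`, joined to each other, and `stem (c :: l)` also hangs from `fork l`. Apex `i` is
joined to `stem []`, to every `stem (c :: l)` with `c ≠ i`, and to every fork at depth `d`.

In a `(t + 1)`-colouring the apexes use `t` colours. The one left over is forced on every leaf
fork; a stem `c :: l` whose fork has the spare colour must take the colour of apex `c`; hence,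
upwards, every fork gets the spare colour, and so does `stem []`, which clashes with `fork []`.
Deleting an edge of the tree, or between an apex and the tree, breaks this chain of forcings
along a single root-to-leaf path; deleting an edge between apexes `i` and `j` lets them share a
colour and frees colour `j` for all stems. So the graph is `k`-critical.

A path meets at most `t` apexes. Between two of them it runs inside the tree, first descending
and then ascending, so it has at most `4d - 1` vertices there, or `4d + 1` if it passes through
`fork []` (which happens at most once). Hence every path has length at most `4d(t + 1)`, while
the graph has at least `t ^ d` vertices.
-/

open SimpleGraph

namespace List

variable {α : Type*}

theorem getElem?_reverse_length_eq_some_iff {l L : List α} (h : l <:+ L) {c : α} :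
    L.reverse[l.length]? = some c ↔ c :: l <:+ L := by
  obtain ⟨s, rfl⟩ := h
  rw [← singleton_append, suffix_append_self_iff, singleton_suffix_iff_getLast?_eq_some]
  simp [getElem?_append_right, ← head?_reverse, head?_eq_getElem?]

theorem IsSuffix.exists_cons_isSuffix {l L : List α} (h : l <:+ L) (hne : l ≠ L) :
    ∃ c, c :: l <:+ L := by
  obtain ⟨s, rfl⟩ := h
  obtain ⟨s, c, rfl⟩ := (eq_nil_or_concat s).resolve_left (by rintro rfl; exact hne rfl)
  exact ⟨c, by simp⟩

theorem head?_eq_some_of_cons_tail_isSuffix {l : List α} {c : α} (h : c :: l.tail <:+ l) :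
    l.head? = some c := by
  cases l with
  | nil => simp at h
  | cons a r => simpa using (h.eq_of_length (by simp)).symm

/-- The run `A` in progress is carried along for the induction. -/
theorem length_le_of_runs (p : α → Bool) (w : α → ℕ) (r : ℕ) :
    ∀ (L A : List α), (∀ x ∈ A, p x = false) →
      (∀ M, M <:+: A ++ L → (∀ x ∈ M, p x = false) → M.length ≤ r + (M.map w).sum) →
      (A ++ L).length ≤ L.countP p + (L.countP p + 1) * r + ((A ++ L).map w).sum
  | [], A, hA, hrun => by simpa using hrun A (by simp) hA
  | x :: L, A, hA, hrun => by
    cases hx : p x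
    · have hA' : ∀ y ∈ A ++ [x], p y = false := by
        simpa [or_imp, forall_and, hx] using hA
      simpa [hx] using length_le_of_runs p w r L (A ++ [x]) hA' (by simpa using hrun)
    · have hA_run := hrun A (infix_append [] A _) hA
      have hL := length_le_of_runs p w r L [] (by simp) fun M hM =>
        hrun M (hM.trans ((suffix_cons x L).trans (suffix_append A _)).isInfix)
      simp only [nil_append] at hL
      simp only [length_append, length_cons, countP_cons, hx, map_append, map_cons, sum_append,
        sum_cons, if_true]
      nlinarith

theorem exists_eq_map_inr {β : Type*} {M : List (α ⊕ β)} (h : ∀ x ∈ M, x.isLeft = false) :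
    ∃ N : List β, M = N.map Sum.inr := by
  induction M with
  | nil => exact ⟨[], rfl⟩
  | cons x M ih =>
    obtain ⟨b, rfl⟩ := Sum.isRight_iff.1 (by simpa using h x (by simp))
    obtain ⟨N, rfl⟩ := ih fun y hy => h y (by simp [hy])
    exact ⟨b :: N, rfl⟩

end List

theorem Fintype.exists_eq_of_forall_ne_of_injective {β α : Type*} [Fintype β] [Fintype α]
    {f : β → α} (hf : f.Injective) (hcard : Fintype.card α = Fintype.card β + 1) :
    ∃ K, ∀ y, (∀ b, f b ≠ y) → y = K := by
  classical
  obtain ⟨K, hK⟩ := Finset.card_eq_one.1 (show (Finset.univ.image f)ᶜ.card = 1 by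
    rw [Finset.card_compl, Finset.card_image_of_injective _ hf, Finset.card_univ]; omega)
  refine ⟨K, fun y hy => ?_⟩
  simpa [hK] using (show y ∈ (Finset.univ.image f)ᶜ by simpa using hy)

namespace SimpleGraph

/-- Such a graph is a forest: each edge joins a vertex to its unique lower neighbour, its parent. -/
structure IsRankedForest {β : Type*} (G : SimpleGraph β) (ρ : β → ℕ) : Prop where
  rank_adj : ∀ {x y}, G.Adj x y → ρ y = ρ x + 1 ∨ ρ x = ρ y + 1
  eq_of_rank_lt : ∀ {x y y'}, G.Adj x y → G.Adj x y' → ρ y < ρ x → ρ y' < ρ x → y = y'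

namespace IsRankedForest

variable {β : Type*} {G : SimpleGraph β} {ρ : β → ℕ} {h : ℕ}

/-- Once a path steps up it never steps down again: the only lower neighbour of a vertex is the
one the path came from. -/
theorem length_add_rank_le_of_rank_succ (hG : G.IsRankedForest ρ) :
    ∀ {x y : β} {M : List β}, (x :: y :: M).IsChain G.Adj → (x :: y :: M).Nodup →
      ρ y = ρ x + 1 → (∀ v ∈ y :: M, ρ v ≤ h) → (y :: M).length + ρ y ≤ h + 1
  | x, y, [], _, _, _, hh => by have := hh y (by simp); simp; omega
  | x, y, z :: M, hc, hnd, hxy, hh => by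
    obtain ⟨hxy', hc⟩ := List.isChain_cons_cons.1 hc
    have hyz : ρ z = ρ y + 1 := by
      refine (hG.rank_adj (List.isChain_cons_cons.1 hc).1).resolve_right fun hzy => ?_
      have := hG.eq_of_rank_lt hxy'.symm (List.isChain_cons_cons.1 hc).1 (by omega) (by omega)
      simp_all
    have := hG.length_add_rank_le_of_rank_succ hc (List.nodup_cons.1 hnd).2 hyz
      fun v hv => hh v (List.mem_cons_of_mem _ hv)
    simp only [List.length_cons] at this ⊢
    omega

theorem cons_length_add_two_mul_le (hG : G.IsRankedForest ρ) {m : ℕ} :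
    ∀ {x : β} {M : List β}, (x :: M).IsChain G.Adj → (x :: M).Nodup →
      (∀ v ∈ x :: M, m ≤ ρ v ∧ ρ v ≤ h) → (x :: M).length + 2 * m ≤ ρ x + h + 1
  | x, [], _, _, hb => by have := hb x (by simp); simp; omega
  | x, y :: M, hc, hnd, hb => by
    have hx := hb x (by simp)
    rcases hG.rank_adj (List.isChain_cons_cons.1 hc).1 with hxy | hyx
    · have := hG.length_add_rank_le_of_rank_succ hc hnd hxy
        fun v hv => (hb v (List.mem_cons_of_mem _ hv)).2
      simp only [List.length_cons] at this ⊢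
      omega
    · have := hG.cons_length_add_two_mul_le (List.isChain_cons_cons.1 hc).2
        (List.nodup_cons.1 hnd).2 fun v hv => hb v (List.mem_cons_of_mem _ hv)
      simp only [List.length_cons] at this ⊢
      omega

theorem length_add_two_mul_le (hG : G.IsRankedForest ρ) {m : ℕ} (hmh : m ≤ h) {M : List β}
    (hc : M.IsChain G.Adj) (hnd : M.Nodup) (hb : ∀ v ∈ M, m ≤ ρ v ∧ ρ v ≤ h) :
    M.length + 2 * m ≤ 2 * h + 1 := by
  cases M with
  | nil => simp; omega
  | cons x M =>
    have := hG.cons_length_add_two_mul_le hc hnd hb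
    have := (hb x (by simp)).2
    omega

end IsRankedForest

variable {V α : Type*} {G : SimpleGraph V}

def Coloring.recolor [DecidableEq V] {e : Sym2 V} {x : V} (C : (G.deleteEdges {e}).Coloring α)
    (hx : x ∈ e) (y : V) (κ : α) (hκ : ∀ z, G.Adj x z → z ≠ y → C z ≠ κ) :
    (G.deleteEdges {s(x, y)}).Coloring α :=
  Coloring.mk (Function.update C x κ) fun {a b} hab => by
    rw [deleteEdges_adj, Set.mem_singleton_iff] at hab
    obtain ⟨hab, hne⟩ := hab
    rcases eq_or_ne a x with rfl | hax
    · rw [Function.update_self, Function.update_of_ne (G.ne_of_adj hab).symm]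
      exact (hκ b hab (by rintro rfl; exact hne rfl)).symm
    rcases eq_or_ne b x with rfl | hbx
    · rw [Function.update_self, Function.update_of_ne hax]
      exact hκ a hab.symm (by rintro rfl; exact hne Sym2.eq_swap)
    rw [Function.update_of_ne hax, Function.update_of_ne hbx]
    refine C.valid (deleteEdges_adj.2 ⟨hab, ?_⟩)
    rintro rfl
    rcases Sym2.mem_iff.1 hx with rfl | rfl <;> simp_all

theorem Subgraph.exists_adj_not_adj_of_ne_top (hG : ∀ v, ∃ w, G.Adj v w) {H : G.Subgraph}
    (hH : H ≠ ⊤) : ∃ v w, G.Adj v w ∧ ¬ H.Adj v w := by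
  by_contra! hall
  refine hH (Subgraph.ext (Set.eq_univ_of_forall fun v => ?_) (funext₂ fun v w => ?_))
  · obtain ⟨w, hvw⟩ := hG v
    exact H.edge_vert (hall v w hvw)
  · exact propext ⟨fun h => H.adj_sub h, hall v w⟩

end SimpleGraph

section Critical

variable {V W : Type*} {G : SimpleGraph V} {k : ℕ}

theorem isCritical_of_deleteEdges_colorable (hcol : ¬ G.Colorable (k - 1))
    (hG : ∀ v, ∃ w, G.Adj v w)
    (hdel : ∀ v w, G.Adj v w → (G.deleteEdges {s(v, w)}).Colorable (k - 1)) :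
    IsCritical k G := by
  refine ⟨hcol, fun H hH => ?_⟩
  obtain ⟨v, w, hvw, hH⟩ := Subgraph.exists_adj_not_adj_of_ne_top hG hH
  refine (hdel v w hvw).of_hom ⟨Subtype.val, fun {a b} hab => ?_⟩
  refine deleteEdges_adj.2 ⟨H.adj_sub hab, fun he => hH ?_⟩
  rcases Sym2.eq_iff.1 (Set.mem_singleton_iff.1 he) with ⟨rfl, rfl⟩ | ⟨rfl, rfl⟩
  exacts [hab, hab.symm]

theorem IsCritical.of_iso {G' : SimpleGraph W} (hG : IsCritical k G) (e : G ≃g G') :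
    IsCritical k G' := by
  refine ⟨fun h => hG.1 (h.of_hom e.toHom), fun H' hH' => ?_⟩
  have hH : H'.comap e.toHom ≠ ⊤ := by
    intro htop
    refine hH' (Subgraph.ext (Set.eq_univ_of_forall fun v => ?_) (funext₂ fun v w => ?_))
    · simpa using congrArg (e.symm v ∈ Subgraph.verts ·) htop
    · refine propext ⟨fun h => H'.adj_sub h, fun h => ?_⟩
      have := (congrArg (fun H => H.Adj (e.symm v) (e.symm w)) htop).mpr (e.symm.map_adj_iff.2 h)
      simpa using this.2
  refine (hG.2 _ hH).of_hom ⟨fun v => ⟨e.symm v, by simp⟩, fun {a b} hab => ?_⟩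
  exact ⟨e.symm.map_adj_iff.2 (H'.adj_sub hab), by simpa using hab⟩

end Critical

namespace ApexTree

abbrev Addr (t d : ℕ) := {l : List (Fin t) // l.length ≤ d}

inductive Node (t d : ℕ)
  | stem (l : Addr t d)
  | fork (l : Addr t d)
  deriving DecidableEq

abbrev Vtx (t d : ℕ) := Fin t ⊕ Node t d

open Node

variable {t d : ℕ}

def root : Addr t d := ⟨[], Nat.zero_le d⟩

instance : Finite (Addr t d) := (List.finite_length_le (Fin t) d).to_subtype

instance : Finite (Node t d) :=
  Finite.of_injective (fun | stem l => (Sum.inl l : Addr t d ⊕ Addr t d) | fork l => .inr l)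
    (by rintro (l | l) (l' | l') h <;> simp_all)

/-- The head of a word is its last letter, so `l'.val = l.val.tail` says that `stem l` hangs
from `fork l'`. -/
def rel : Vtx t d → Vtx t d → Prop
  | .inl _, .inl _ => True
  | .inl i, .inr (stem l) => l.val.head? ≠ some i
  | .inl _, .inr (fork l) => l.val.length = d
  | .inr (stem l), .inr (fork l') => l'.val = l.val ∨ l'.val = l.val.tail
  | _, _ => False

variable (t d) in
def graph : SimpleGraph (Vtx t d) := SimpleGraph.fromRel rel

@[simp] theorem adj_apex_apex {i j : Fin t} : (graph t d).Adj (.inl i) (.inl j) ↔ i ≠ j := by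
  simp [graph, rel]

@[simp] theorem adj_apex_stem {i : Fin t} {l : Addr t d} :
    (graph t d).Adj (.inl i) (.inr (stem l)) ↔ l.val.head? ≠ some i := by
  simp [graph, rel]

@[simp] theorem adj_apex_fork {i : Fin t} {l : Addr t d} :
    (graph t d).Adj (.inl i) (.inr (fork l)) ↔ l.val.length = d := by
  simp [graph, rel]

@[simp] theorem adj_stem_fork {l l' : Addr t d} :
    (graph t d).Adj (.inr (stem l)) (.inr (fork l')) ↔ l'.val = l.val ∨ l'.val = l.val.tail := by
  simp [graph, rel]

@[simp] theorem not_adj_stem_stem {l l' : Addr t d} :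
    ¬ (graph t d).Adj (.inr (stem l)) (.inr (stem l')) := by
  simp [graph, rel]

@[simp] theorem not_adj_fork_fork {l l' : Addr t d} :
    ¬ (graph t d).Adj (.inr (fork l)) (.inr (fork l')) := by
  simp [graph, rel]

@[simp] theorem adj_stem_apex {i : Fin t} {l : Addr t d} :
    (graph t d).Adj (.inr (stem l)) (.inl i) ↔ l.val.head? ≠ some i := by
  rw [adj_comm, adj_apex_stem]

@[simp] theorem adj_fork_stem {l l' : Addr t d} :
    (graph t d).Adj (.inr (fork l')) (.inr (stem l)) ↔ l'.val = l.val ∨ l'.val = l.val.tail := by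
  rw [adj_comm, adj_stem_fork]

theorem exists_adj (v : Vtx t d) : ∃ w, (graph t d).Adj v w := by
  rcases v with i | l | l
  · exact ⟨.inr (stem root), by simp [root]⟩
  · exact ⟨.inr (fork l), by simp⟩
  · exact ⟨.inr (stem l), by simp⟩

theorem not_colorable : ¬ (graph t d).Colorable (t + 1) := by
  rintro ⟨C⟩
  obtain ⟨K, hK⟩ := Fintype.exists_eq_of_forall_ne_of_injective (f := fun i => C (.inl i))
    (fun i j hij => by_contra fun hne => C.valid (adj_apex_apex.2 hne) hij) (by simp)
  have stem_eq : ∀ (l : Addr t d) c, l.val.head? = some c → C (.inr (fork l)) = K →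
      C (.inr (stem l)) = C (.inl c) := by
    intro l c hc hfork
    by_contra hne
    refine C.valid (adj_stem_fork.2 (Or.inl rfl) : (graph t d).Adj _ (.inr (fork l))) ?_
    refine hfork ▸ hK _ fun i => ?_
    rcases eq_or_ne i c with rfl | hic
    · exact Ne.symm hne
    · exact C.valid (adj_apex_stem.2 (by simpa [hc] using hic.symm))
  have fork_eq : ∀ l : Addr t d, C (.inr (fork l)) = K := by
    intro l
    induction hn : d - l.val.length using Nat.strong_induction_on generalizing l with
    | _ n ih =>
    refine hK _ fun c hc => ?_
    by_cases hl : l.val.length = d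
    · exact C.valid (adj_apex_fork.2 hl) hc
    · let lc : Addr t d := ⟨c :: l.val, by simp; have := l.2; omega⟩
      have := stem_eq lc c rfl (ih _ (by simp [lc]; omega) lc rfl)
      exact C.valid (adj_stem_fork.2 (Or.inr rfl) : (graph t d).Adj (.inr (stem lc)) _)
        (this.trans hc)
  have stem_root : C (.inr (stem root)) = K :=
    hK _ fun i => C.valid (adj_apex_stem.2 (by simp [root]))
  exact C.valid (adj_stem_fork.2 (Or.inl rfl)) (stem_root.trans (fork_eq root).symm)

/-- Away from the path from the root to `L` this is the colouring forced from the leaves, with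
`none` as the spare colour; along that path stems and forks swap roles, which leaves a single
conflict, on the edge between `stem L` and `fork L`. -/
def pathColor (L : Addr t d) : Vtx t d → Option (Fin t)
  | .inl i => some i
  | .inr (stem l) => if l.val <:+ L.val then none else l.val.head?
  | .inr (fork l) => if l.val <:+ L.val then L.val.reverse[l.val.length]? else none

theorem pathColor_fork_eq_some {L l : Addr t d} {c : Fin t} :
    pathColor L (.inr (fork l)) = some c ↔ c :: l.val <:+ L.val := by
  by_cases hl : l.val <:+ L.val
  · simp [pathColor, hl, List.getElem?_reverse_length_eq_some_iff hl]
  · simp only [pathColor, hl, if_false, reduceCtorEq, false_iff]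
    exact fun h => hl ((List.suffix_cons c _).trans h)

theorem pathColor_fork_self (L : Addr t d) : pathColor L (.inr (fork L)) = none := by
  simp [pathColor]

theorem pathColor_stem_of_isSuffix {L l : Addr t d} (h : l.val <:+ L.val) :
    pathColor L (.inr (stem l)) = none := by
  simp [pathColor, h]

theorem pathColor_ne_of_rel (L : Addr t d) {v w : Vtx t d} (hvw : rel v w) (hne : v ≠ w)
    (hL : s(v, w) ≠ s(.inr (stem L), .inr (fork L))) : pathColor L v ≠ pathColor L w := by
  match v, w, hvw with
  | .inl i, .inl j, _ => simpa [pathColor] using hne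
  | .inl i, .inr (stem l), (h : l.val.head? ≠ some i) =>
    simp only [pathColor]; split_ifs <;> simp [h.symm]
  | .inl i, .inr (fork l), (h : l.val.length = d) =>
    have : L.val.reverse[l.val.length]? = none := by simpa [h] using L.2
    simp only [pathColor]; split_ifs <;> simp [this]
  | .inr (stem l), .inr (fork l'), (h : l'.val = l.val ∨ l'.val = l.val.tail) =>
    by_cases hl : l.val <:+ L.val
    · obtain ⟨c, hc⟩ : ∃ c, c :: l'.val <:+ L.val := by
        by_cases hll : l'.val = l.val
        · refine (hll ▸ hl).exists_cons_isSuffix fun hl'L => hL ?_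
          rw [Subtype.ext hll, Subtype.ext (hll.symm.trans hl'L)]
        · obtain ⟨c, r, hcr⟩ := List.exists_cons_of_ne_nil (l := l.val) (by rintro h'; simp_all)
          exact ⟨c, by simp_all⟩
      rw [pathColor_fork_eq_some.2 hc]
      simp [pathColor, hl]
    · obtain ⟨c, r, hcr⟩ := List.exists_cons_of_ne_nil (l := l.val) (by rintro h'; simp_all)
      have hstem : pathColor L (.inr (stem l)) = some c := by
        simp only [pathColor]; rw [if_neg hl, hcr, List.head?_cons]
      rw [hstem, Ne, eq_comm, pathColor_fork_eq_some]
      intro hc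
      rcases h with h | h <;> rw [h] at hc
      · exact hl ((List.suffix_cons c _).trans hc)
      · exact hl (by simpa [hcr] using hc)

def coloringOfRel {α : Type*} (f : Vtx t d → α) (e : Sym2 (Vtx t d))
    (hf : ∀ v w, rel v w → v ≠ w → s(v, w) ≠ e → f v ≠ f w) :
    ((graph t d).deleteEdges {e}).Coloring α :=
  Coloring.mk f fun {a b} hab => by
    obtain ⟨⟨hne, h | h⟩, he⟩ := deleteEdges_adj.1 hab
    · exact hf a b h hne he
    · exact (hf b a h hne.symm (by rwa [Sym2.eq_swap])).symm

def pathColoring (L : Addr t d) :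
    ((graph t d).deleteEdges {s(.inr (stem L), .inr (fork L))}).Coloring (Option (Fin t)) :=
  coloringOfRel (pathColor L) _ fun _ _ => pathColor_ne_of_rel L

@[simp] theorem pathColoring_apply (L : Addr t d) (v : Vtx t d) :
    pathColoring L v = pathColor L v := rfl

def apexApexColoring {i j : Fin t} (hij : i ≠ j) :
    ((graph t d).deleteEdges {s(.inl i, .inl j)}).Coloring (Option (Fin t)) :=
  coloringOfRel (fun
      | .inl s => some (if s = j then i else s)
      | .inr (stem _) => some j
      | .inr (fork _) => none) _
    fun v w hvw hne he => by
      match v, w, hvw with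
      | .inl a, .inl b, _ =>
        simp only [ne_eq, Sum.inl.injEq, Sym2.eq_iff] at hne he
        simp only [ne_eq, Option.some.injEq]
        split_ifs <;> grind
      | .inl a, .inr (stem _), _ => dsimp only; split_ifs with h <;> simp [hij, h]
      | .inl a, .inr (fork _), _ => simp
      | .inr (stem _), .inr (fork _), _ => simp

def apexStemColoring {i : Fin t} {l : Addr t d} (h : l.val.head? ≠ some i) :
    ((graph t d).deleteEdges {s(.inr (stem l), .inl i)}).Coloring (Option (Fin t)) :=
  (pathColoring l).recolor (Sym2.mem_mk_left _ _) _ (some i) fun z hz hzi => by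
    rcases z with j | l' | l'
    · simpa [pathColor] using fun hji => hzi (by rw [hji])
    · simp at hz
    · rw [pathColoring_apply, Ne, pathColor_fork_eq_some]
      intro hi
      rcases adj_stem_fork.1 hz with hl' | hl' <;> rw [hl'] at hi
      · simpa using hi.length_le
      · exact h (List.head?_eq_some_of_cons_tail_isSuffix hi)

def apexForkColoring {i : Fin t} {l : Addr t d} (h : l.val.length = d) :
    ((graph t d).deleteEdges {s(.inr (fork l), .inl i)}).Coloring (Option (Fin t)) :=
  (pathColoring l).recolor (Sym2.mem_mk_right _ _) _ (some i) fun z hz hzi => by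
    rcases z with j | l' | l'
    · simpa [pathColor] using fun hji => hzi (by rw [hji])
    · rw [pathColoring_apply, pathColor_stem_of_isSuffix]
      · simp
      rcases adj_fork_stem.1 hz with hl' | hl'
      · rw [hl']
      · have := l'.2
        have := congrArg List.length hl'
        simp only [List.length_tail] at this
        rw [List.eq_nil_of_length_eq_zero (by omega : l'.val.length = 0)]
        exact List.nil_suffix
    · simp at hz

def stemForkColoring {l l' : Addr t d} {c : Fin t} (hc : l.val = c :: l'.val) :
    ((graph t d).deleteEdges {s(.inr (stem l), .inr (fork l'))}).Coloring (Option (Fin t)) :=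
  (pathColoring l).recolor (Sym2.mem_mk_left _ _) _ (some c) fun z hz hzi => by
    rcases z with j | l'' | l''
    · simp only [adj_stem_apex, hc, List.head?_cons] at hz
      simpa [pathColor] using Ne.symm hz
    · simp at hz
    · rcases adj_stem_fork.1 hz with hl'' | hl''
      · rw [Subtype.ext hl'', pathColoring_apply, pathColor_fork_self]
        simp
      · have : l''.val = l'.val := by rw [hl'', hc, List.tail_cons]
        exact (hzi (by rw [Subtype.ext this])).elim

theorem colorable_deleteEdges {v w : Vtx t d} (hvw : (graph t d).Adj v w) :
    ((graph t d).deleteEdges {s(v, w)}).Colorable (t + 1) := by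
  suffices key : ∀ v w, rel v w → v ≠ w →
      Nonempty (((graph t d).deleteEdges {s(v, w)}).Coloring (Option (Fin t))) by
    obtain ⟨hne, h | h⟩ := hvw
    · obtain ⟨C⟩ := key v w h hne
      simpa using C.colorable
    · obtain ⟨C⟩ := key w v h hne.symm
      rw [Sym2.eq_swap]
      simpa using C.colorable
  intro v w hvw hne
  match v, w, hvw with
  | .inl i, .inl j, _ => exact ⟨apexApexColoring (by simpa using hne)⟩
  | .inl i, .inr (stem l), (h : l.val.head? ≠ some i) =>
    rw [Sym2.eq_swap]; exact ⟨apexStemColoring h⟩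
  | .inl i, .inr (fork l), (h : l.val.length = d) =>
    rw [Sym2.eq_swap]; exact ⟨apexForkColoring h⟩
  | .inr (stem l), .inr (fork l'), (h : l'.val = l.val ∨ l'.val = l.val.tail) =>
    by_cases hll : l' = l
    · subst hll
      exact ⟨pathColoring l'⟩
    obtain ⟨c, hc⟩ : ∃ c, l.val = c :: l'.val := by
      rcases h with h | h
      · exact absurd (Subtype.ext h) hll
      · rcases hl : l.val with _ | ⟨c, r⟩
        · exact absurd (Subtype.ext (by simp_all)) hll
        · exact ⟨c, by simp_all⟩
    exact ⟨stemForkColoring hc⟩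

theorem isCritical_graph : IsCritical (t + 2) (graph t d) :=
  isCritical_of_deleteEdges_colorable not_colorable exists_adj fun _ _ => colorable_deleteEdges

/-- The tree is rooted at `fork []`, with `stem []` a leaf hanging from it. -/
def rank : Node t d → ℕ
  | stem l => 2 * l.val.tail.length + 1
  | fork l => 2 * l.val.length

variable (t d) in
abbrev tree : SimpleGraph (Node t d) := (graph t d).comap Sum.inr

theorem isRankedForest_tree : (tree t d).IsRankedForest rank where
  rank_adj {x y} h := by
    rcases x with l | l <;> rcases y with l' | l' <;> simp at h
    · rcases h with h | h <;> rcases hl : l.val with _ | ⟨c, r⟩ <;> simp_all [rank]; omega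
    · rcases h with h | h <;> rcases hl : l'.val with _ | ⟨c, r⟩ <;> simp_all [rank]; omega
  eq_of_rank_lt {x y y'} h h' hy hy' := by
    rcases x with l | l <;> rcases y with l₁ | l₁ <;> rcases y' with l₂ | l₂ <;> simp at h h'
    · have parent : ∀ l' : Addr t d, l'.val = l.val ∨ l'.val = l.val.tail →
          2 * l'.val.length < 2 * l.val.tail.length + 1 → l'.val = l.val.tail := by
        rintro l' (h | h) hlt
        · rcases hl : l.val with _ | ⟨c, r⟩ <;> simp_all
        · exact h
      simp only [rank] at hy hy'
      exact congrArg fork (Subtype.ext ((parent _ h hy).trans (parent _ h' hy').symm))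
    · have parent : ∀ l' : Addr t d, l.val = l'.val ∨ l.val = l'.val.tail →
          2 * l'.val.tail.length + 1 < 2 * l.val.length → l'.val = l.val := by
        rintro l' (h | h) hlt
        · exact h.symm
        · simp [h] at hlt
      simp only [rank] at hy hy'
      exact congrArg stem (Subtype.ext ((parent _ h hy).trans (parent _ h' hy').symm))

theorem rank_le (hd : 0 < d) (x : Node t d) : rank x ≤ 2 * d := by
  rcases x with l | l <;> have := l.2 <;> simp [rank] <;> omega

theorem eq_fork_root_of_rank_eq_zero {x : Node t d} (hx : rank x = 0) : x = fork root := by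
  rcases x with l | l
  · simp [rank] at hx
  · simp only [rank, mul_eq_zero, OfNat.ofNat_ne_zero, List.length_eq_zero_iff, false_or] at hx
    exact congrArg fork (Subtype.ext hx)

theorem length_le_of_isChain (hd : 0 < d) {N : List (Node t d)} (hc : N.IsChain (tree t d).Adj)
    (hnd : N.Nodup) : N.length ≤ 4 * d + 1 := by
  have := isRankedForest_tree.length_add_two_mul_le (Nat.zero_le _) hc hnd
    fun v _ => ⟨Nat.zero_le _, rank_le hd v⟩
  omega

theorem length_le_of_isChain_of_not_mem (hd : 0 < d) {N : List (Node t d)}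
    (hc : N.IsChain (tree t d).Adj) (hnd : N.Nodup) (hr : fork root ∉ N) :
    N.length ≤ 4 * d - 1 := by
  have := isRankedForest_tree.length_add_two_mul_le (by omega) hc hnd
    fun v hv => ⟨Nat.one_le_iff_ne_zero.2 fun h0 => hr (eq_fork_root_of_rank_eq_zero h0 ▸ hv),
      rank_le hd v⟩
  omega

/-- Pays for the two extra vertices of a run through `fork []`. -/
def rootWeight (x : Vtx t d) : ℕ := if x = .inr (fork root) then 2 else 0

theorem length_le_of_run (hd : 0 < d) {M : List (Vtx t d)} (hc : M.IsChain (graph t d).Adj)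
    (hnd : M.Nodup) (hM : ∀ x ∈ M, x.isLeft = false) :
    M.length ≤ 4 * d - 1 + (M.map rootWeight).sum := by
  obtain ⟨N, rfl⟩ := List.exists_eq_map_inr hM
  rw [List.isChain_map] at hc
  rw [List.nodup_map_iff Sum.inr_injective] at hnd
  rw [List.length_map]
  by_cases hr : fork root ∈ N
  · have := List.le_sum_of_mem (List.mem_map_of_mem (f := rootWeight)
      (List.mem_map_of_mem (f := Sum.inr) hr))
    have := length_le_of_isChain hd hc hnd
    simp only [rootWeight, if_true] at *
    omega
  · have := length_le_of_isChain_of_not_mem hd hc hnd hr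
    omega

theorem countP_isLeft_le {L : List (Vtx t d)} (hL : L.Nodup) : L.countP (·.isLeft) ≤ t := by
  have hnd : (L.filterMap Sum.getLeft?).Nodup :=
    hL.filterMap fun a a' b hb hb' => by simp_all
  have hleft : (fun a : Vtx t d => a.getLeft?.isSome) = (·.isLeft) := by
    funext a; cases a <;> rfl
  simpa [List.length_filterMap_eq_countP, hleft] using hnd.length_le_card

theorem sum_map_rootWeight_le {L : List (Vtx t d)} (hL : L.Nodup) :
    (L.map rootWeight).sum ≤ 2 := by
  rw [← List.sum_toFinset _ hL]
  unfold rootWeight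
  rw [Finset.sum_ite_eq']
  split_ifs <;> omega

theorem length_le_of_isPath (hd : 0 < d) {u v : Vtx t d} {p : (graph t d).Walk u v}
    (hp : p.IsPath) : p.length ≤ 4 * d * (t + 1) := by
  have hL := List.length_le_of_runs (·.isLeft) rootWeight _ p.support [] (by simp) fun M hM hMl =>
    length_le_of_run hd (p.isChain_adj_support.infix (by simpa using hM))
      (hp.support_nodup.sublist (by simpa using hM.sublist)) hMl
  have hc := countP_isLeft_le hp.support_nodup
  have hw := sum_map_rootWeight_le hp.support_nodup
  simp only [List.nil_append, SimpleGraph.Walk.length_support] at hL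
  obtain ⟨e, rfl⟩ : ∃ e, d = e + 1 := ⟨d - 1, by omega⟩
  rw [show 4 * (e + 1) - 1 = 4 * e + 3 by omega] at hL
  nlinarith

theorem pow_le_card : t ^ d ≤ Nat.card (Vtx t d) := by
  simpa using Nat.card_le_card_of_injective
    (fun g : Fin d → Fin t => (.inr (fork ⟨List.ofFn g, by simp⟩) : Vtx t d))
    (fun g g' h => List.ofFn_injective (by simpa using h))

end ApexTree

theorem natCast_le_mul_log_div_log {ℓ d t n : ℕ} (ht : 2 ≤ t) (hn : t ^ d ≤ n)
    (hℓ : ℓ ≤ 4 * d * (t + 1)) : (ℓ : ℝ) ≤ 4 * (t + 1) * Real.log n / Real.log t := by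
  have hlog : 0 < Real.log t := Real.log_pos (by exact_mod_cast ht)
  have hdn : d * Real.log t ≤ Real.log n := by
    rw [← Real.log_pow]
    exact Real.log_le_log (by positivity) (by exact_mod_cast hn)
  rw [le_div_iff₀ hlog]
  calc (ℓ : ℝ) * Real.log t ≤ 4 * d * (t + 1) * Real.log t := by gcongr; exact_mod_cast hℓ
    _ = 4 * (t + 1) * (d * Real.log t) := by ring
    _ ≤ 4 * (t + 1) * Real.log n := by gcongr

theorem stmt18 (k : ℕ) (hk : 4 ≤ k) :
    ∀ m : ℕ, ∃ n : ℕ, m ≤ n ∧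
      ∃ G : SimpleGraph (Fin n), IsCritical k G ∧
        ∀ (u v : Fin n) (p : G.Walk u v), p.IsPath →
          (p.length : ℝ) ≤ 4 * ((k : ℝ) - 1) * Real.log n / Real.log ((k : ℝ) - 2) := by
  intro m
  obtain ⟨t, rfl⟩ : ∃ t, k = t + 2 := ⟨k - 2, by omega⟩
  let φ := Iso.map (Finite.equivFin (ApexTree.Vtx t (m + 1))) (ApexTree.graph t (m + 1))
  have hcard : t ^ (m + 1) ≤ Nat.card (ApexTree.Vtx t (m + 1)) := ApexTree.pow_le_card
  refine ⟨_, ?_, _, ApexTree.isCritical_graph.of_iso φ, fun u v p hp => ?_⟩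
  · exact (Nat.lt_pow_self (by omega)).le.trans
      ((Nat.pow_le_pow_right (by omega) m.le_succ).trans hcard)
  have hpath :=
    ApexTree.length_le_of_isPath m.succ_pos (hp.map (f := φ.symm.toHom) φ.symm.injective)
  rw [Walk.length_map] at hpath
  convert natCast_le_mul_log_div_log (by omega) hcard hpath using 3 <;> push_cast <;> ring
end
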